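/- arXiv:2006.02316 — 13 statements merged into one kernel-verified Lean document; each statement's English description precedes it below -/
import Mathlib

section
/- Let p be a prime and f : ℤ_p → ℤ_p a continuous function. Then for every x ∈ ℤ_p the family (B^f_n · χ_n(x))_{n≥0} is summable in ℤ_p with sum f(x). Moreover the coefficients are unique: if (c_n)_{n≥0} is any sequence in ℤ_p such that for every x ∈ ℤ_p the family (c_n · χ_n(x))_{n≥0} is summable with sum f(x), then c_n = B^f_n for all n ≥ 0. -/
/-!
Writing `aₖ := x.appr k` for the digit expansion of `x` truncated to `k` digits, `χₙ(x) = 1` exactly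
when `n = a_{log_p n + 1}`. Hence the van der Put series summed over `n < p^(M+1)` telescopes to
`f(a_{M+1})`, and continuity of `f` gives convergence to `f x`; summability holds because uniform
continuity forces `B^f_n → 0`. Uniqueness follows by strong induction, evaluating at natural
numbers `N`, where only `χ₀, …, χ_N` can be nonzero and `χ_N(N) = 1`.
-/

/-- The van der Put coefficients of `f : ℤ_p → ℤ_p`:
`B^f_n = f(n)` for `0 ≤ n < p` and `B^f_n = f(n) - f(n mod p^⌊log_p n⌋)` for `n ≥ p`. -/
noncomputable def vdpB (p : ℕ) [Fact p.Prime] (f : PadicInt p → PadicInt p) (n : ℕ) : PadicInt p :=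
  if n < p then f n else f n - f ((n % p ^ Nat.log p n : ℕ))

/-- `χ_n`, the `ℤ_p`-valued indicator function of the ball
`{x : ‖x - n‖ ≤ p^{-(⌊log_p n⌋ + 1)}}`. -/
noncomputable def chi (p : ℕ) [Fact p.Prime] (n : ℕ) (x : PadicInt p) : PadicInt p :=
  if ‖x - (n : PadicInt p)‖ ≤ (p : ℝ) ^ (-((Nat.log p n : ℤ) + 1)) then 1 else 0

open Filter Finset Topology Uniformity

namespace PadicInt

variable {p : ℕ} [Fact p.Prime]

theorem toZModPow_apply (x : ℤ_[p]) (k : ℕ) : toZModPow k x = x.appr k := rfl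

theorem appr_eq_iff_toZModPow_eq {x : ℤ_[p]} {k n : ℕ} (hn : n < p ^ k) :
    x.appr k = n ↔ toZModPow k x = n := by
  rw [toZModPow_apply, ZMod.natCast_eq_natCast_iff',
    Nat.mod_eq_of_lt (appr_lt x k), Nat.mod_eq_of_lt hn]

theorem appr_eq_iff_norm_sub_le {x : ℤ_[p]} {k n : ℕ} (hn : n < p ^ k) :
    x.appr k = n ↔ ‖x - n‖ ≤ (p : ℝ) ^ (-k : ℤ) := by
  rw [appr_eq_iff_toZModPow_eq hn, norm_le_pow_iff_mem_span_pow, ← ker_toZModPow,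
    RingHom.mem_ker, map_sub, map_natCast, sub_eq_zero]

theorem appr_natCast (n k : ℕ) : (n : ℤ_[p]).appr k = n % p ^ k :=
  (appr_eq_iff_toZModPow_eq (Nat.mod_lt _ (pow_pos (Fact.out : p.Prime).pos k))).2 <| by
    rw [map_natCast, ZMod.natCast_mod]

theorem appr_mod_pow (x : ℤ_[p]) {m n : ℕ} (h : m ≤ n) : x.appr n % p ^ m = x.appr m := by
  rw [← Nat.mod_eq_of_lt (appr_lt x m), ← ZMod.natCast_eq_natCast_iff']
  simpa only [toZModPow_apply, ZMod.cast_natCast (pow_dvd_pow p h)] using cast_toZModPow m n h x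

theorem norm_sub_appr_le (x : ℤ_[p]) (k : ℕ) : ‖x - x.appr k‖ ≤ (p : ℝ) ^ (-k : ℤ) :=
  (norm_le_pow_iff_mem_span_pow _ k).2 (appr_spec k x)

theorem tendsto_dist_appr {ι : Type*} {l : Filter ι} {k : ι → ℕ} (hk : Tendsto k l atTop)
    (u : ι → ℤ_[p]) : Tendsto (fun i => dist (u i) ((u i).appr (k i))) l (𝓝 0) := by
  have hp : (p : ℝ)⁻¹ < 1 := inv_lt_one_of_one_lt₀ (mod_cast (Fact.out : p.Prime).one_lt)
  refine squeeze_zero (fun _ => dist_nonneg) (fun i => ?_)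
    ((tendsto_pow_atTop_nhds_zero_of_lt_one (by positivity) hp).comp hk)
  simpa [dist_eq_norm] using norm_sub_appr_le (u i) (k i)

theorem tendsto_appr (x : ℤ_[p]) : Tendsto (fun k => (x.appr k : ℤ_[p])) atTop (𝓝 x) := by
  rw [tendsto_iff_dist_tendsto_zero]
  exact (tendsto_dist_appr tendsto_id fun _ => x).congr fun _ => dist_comm _ _

end PadicInt

open PadicInt

section VanDerPut

variable {p : ℕ} [Fact p.Prime]

theorem chi_eq_ite (n : ℕ) (x : ℤ_[p]) :
    chi p n x = if x.appr (Nat.log p n + 1) = n then 1 else 0 := by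
  simp only [chi, appr_eq_iff_norm_sub_le (Nat.lt_pow_succ_log_self (Fact.out : p.Prime).one_lt n),
    Nat.cast_succ]

theorem norm_chi_le_one (n : ℕ) (x : ℤ_[p]) : ‖chi p n x‖ ≤ 1 := by
  rw [chi]
  split_ifs <;> simp

theorem chi_self (n : ℕ) : chi p n (n : ℤ_[p]) = 1 := by
  rw [chi, if_pos (by rw [sub_self, norm_zero]; positivity)]

theorem chi_natCast_eq_zero_of_lt {m N : ℕ} (h : N < m) : chi p m (N : ℤ_[p]) = 0 := by
  rw [chi_eq_ite, appr_natCast, if_neg ((Nat.mod_le _ _).trans_lt h).ne]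

variable (f : ℤ_[p] → ℤ_[p])

theorem sum_range_p_vdpB_mul_chi (x : ℤ_[p]) :
    ∑ n ∈ range p, vdpB p f n * chi p n x = f (x.appr 1) := by
  have hterm : ∀ n ∈ range p, vdpB p f n * chi p n x = if x.appr 1 = n then f n else 0 := by
    intro n hn
    have hn : n < p := mem_range.1 hn
    rw [vdpB, if_pos hn, chi_eq_ite, Nat.log_of_lt hn]
    split_ifs <;> simp
  rw [sum_congr rfl hterm, sum_ite_eq, if_pos (mem_range.2 (by simpa using appr_lt x 1))]

/-- Only `n = x.appr (M + 1)` can contribute, and it does exactly when it has `M + 1` digits. -/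
theorem sum_Ico_vdpB_mul_chi (x : ℤ_[p]) {M : ℕ} (hM : 1 ≤ M) :
    ∑ n ∈ Ico (p ^ M) (p ^ (M + 1)), vdpB p f n * chi p n x
      = f (x.appr (M + 1)) - f (x.appr M) := by
  set a := x.appr (M + 1)
  have hp : p ≤ p ^ M := Nat.le_self_pow (by omega) p
  have hterm : ∀ n ∈ Ico (p ^ M) (p ^ (M + 1)),
      vdpB p f n * chi p n x = if a = n then f a - f (x.appr M) else 0 := by
    intro n hn
    obtain ⟨hlo, hhi⟩ := mem_Ico.1 hn
    rw [vdpB, if_neg (by omega), chi_eq_ite, Nat.log_eq_of_pow_le_of_lt_pow hlo hhi]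
    split_ifs with han
    · rw [← han, appr_mod_pow x M.le_succ, mul_one]
    · rw [mul_zero]
  rw [sum_congr rfl hterm, sum_ite_eq]
  split_ifs with ha
  · rfl
  · have hsmall : a < p ^ M := by
      have := appr_lt x (M + 1)
      simp only [mem_Ico, not_and, not_lt] at ha
      omega
    rw [← appr_mod_pow x M.le_succ, Nat.mod_eq_of_lt hsmall, sub_self]

theorem sum_range_pow_succ_vdpB_mul_chi (x : ℤ_[p]) (M : ℕ) :
    ∑ n ∈ range (p ^ (M + 1)), vdpB p f n * chi p n x = f (x.appr (M + 1)) := by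
  induction M with
  | zero => simpa using sum_range_p_vdpB_mul_chi f x
  | succ M ih =>
    rw [← sum_range_add_sum_Ico _ (Nat.pow_le_pow_right (Fact.out : p.Prime).pos (M + 1).le_succ), ih,
      sum_Ico_vdpB_mul_chi f x (by omega), add_sub_cancel]

theorem tendsto_vdpB (hf : Continuous f) : Tendsto (vdpB p f) atTop (𝓝 0) := by
  have hlog : Tendsto (Nat.log p) atTop atTop := tendsto_atTop_atTop.2 fun j =>
    ⟨p ^ j, fun _ hn => Nat.le_log_of_pow_le (Fact.out : p.Prime).one_lt hn⟩
  have hpairs : Tendsto (fun n : ℕ => ((n : ℤ_[p]), ((n : ℤ_[p]).appr (Nat.log p n) : ℤ_[p])))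
      atTop (𝓤 ℤ_[p]) :=
    tendsto_uniformity_iff_dist_tendsto_zero.2 (tendsto_dist_appr hlog _)
  have hdist := tendsto_uniformity_iff_dist_tendsto_zero.1
    (Tendsto.comp (CompactSpace.uniformContinuous_of_continuous hf) hpairs)
  rw [tendsto_zero_iff_norm_tendsto_zero]
  refine hdist.congr' ?_
  filter_upwards [eventually_ge_atTop p] with n hn
  rw [vdpB, if_neg (not_lt.2 hn), ← appr_natCast, dist_eq_norm]
  rfl

theorem hasSum_vdpB_mul_chi (hf : Continuous f) (x : ℤ_[p]) :
    HasSum (fun n => vdpB p f n * chi p n x) (f x) := by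
  have hterms : Tendsto (fun n => vdpB p f n * chi p n x) atTop (𝓝 0) :=
    squeeze_zero_norm (fun n => (norm_mul_le _ _).trans (mul_le_of_le_one_right (norm_nonneg _)
      (norm_chi_le_one n x))) (tendsto_zero_iff_norm_tendsto_zero.1 (tendsto_vdpB f hf))
  have hsum := (NonarchimedeanAddGroup.summable_of_tendsto_cofinite_zero
    (Nat.cofinite_eq_atTop ▸ hterms)).hasSum
  have hblocks : Tendsto (fun M => p ^ (M + 1)) atTop atTop :=
    (tendsto_pow_atTop_atTop_of_one_lt (Fact.out : p.Prime).one_lt).comp (tendsto_add_atTop_nat 1)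
  have hpartial : Tendsto (fun M => ∑ n ∈ range (p ^ (M + 1)), vdpB p f n * chi p n x)
      atTop (𝓝 (f x)) := by
    simp only [sum_range_pow_succ_vdpB_mul_chi]
    exact (hf.tendsto x).comp ((tendsto_appr x).comp (tendsto_add_atTop_nat 1))
  rwa [tendsto_nhds_unique (hsum.tendsto_sum_nat.comp hblocks) hpartial] at hsum

theorem eq_zero_of_hasSum_mul_chi_natCast {c : ℕ → ℤ_[p]}
    (hc : ∀ N : ℕ, HasSum (fun m => c m * chi p m (N : ℤ_[p])) 0) : c = 0 := by
  funext N
  induction N using Nat.strong_induction_on with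
  | _ N ih =>
    have hfinite : HasSum (fun m => c m * chi p m (N : ℤ_[p]))
        (∑ m ∈ range (N + 1), c m * chi p m (N : ℤ_[p])) :=
      hasSum_sum_of_ne_finset_zero fun m hm => by
        rw [chi_natCast_eq_zero_of_lt (by simpa using hm), mul_zero]
    have hzero := (hc N).unique hfinite
    rwa [sum_range_succ, chi_self, mul_one, sum_eq_zero fun m hm => by
      rw [ih m (mem_range.1 hm), Pi.zero_apply, zero_mul], zero_add, eq_comm] at hzero

end VanDerPut

/-- For a continuous `f : ℤ_p → ℤ_p`, the family `(B^f_n · χ_n(x))_n` is summable with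
sum `f(x)` for every `x`, and the coefficients with this property are unique. -/
theorem vanDerPut_expansion (p : ℕ) [Fact p.Prime]
    (f : PadicInt p → PadicInt p) (hf : Continuous f) :
    (∀ x : PadicInt p, HasSum (fun n : ℕ => vdpB p f n * chi p n x) (f x)) ∧
    (∀ c : ℕ → PadicInt p,
      (∀ x : PadicInt p, HasSum (fun n : ℕ => c n * chi p n x) (f x)) →
      ∀ n : ℕ, c n = vdpB p f n) := by
  refine ⟨hasSum_vdpB_mul_chi f hf, fun c hc n => ?_⟩
  have hdiff : c - vdpB p f = 0 := eq_zero_of_hasSum_mul_chi_natCast fun N => by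
    simpa only [Pi.sub_apply, sub_mul, sub_self] using (hc N).sub (hasSum_vdpB_mul_chi f hf N)
  exact sub_eq_zero.1 (congrFun hdiff n)
end

section
/- Let p be a prime and f : ℤ_p → ℤ_p a continuous function. Then f is 1-Lipschitz if and only if for every integer n ≥ p one has ‖f(n) − f(n mod p^{⌊log_p n⌋})‖ ≤ p^{−⌊log_p n⌋}, i.e. p^{k(n)} divides the van der Put coefficient B^f_n in ℤ_p for every n ≥ 1. -/
/-! Every `n ≥ p` is congruent to `n mod p^{k(n)}` modulo `p^{k(n)}`, so a 1-Lipschitz `f`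
satisfies the bounds. Conversely, the bounds let one walk from `a` down to `a mod p^m` by deleting
leading base-`p` digits, each step moving `f` by at most `p^{-k} ≤ p^{-m}`; by the ultrametric
inequality `f` is then 1-Lipschitz on `ℕ`, hence on `ℤ_p` by continuity and density. -/

namespace PadicInt

variable {p : ℕ} [Fact p.Prime]

theorem norm_natCast_sub_le_pow_iff_modEq {a b m : ℕ} :
    ‖(a : ℤ_[p]) - b‖ ≤ (p : ℝ) ^ (-(m : ℤ)) ↔ a ≡ b [MOD p ^ m] := by
  rw [Nat.modEq_iff_dvd, dvd_sub_comm, ← Int.cast_natCast a, ← Int.cast_natCast b, ← Int.cast_sub,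
    norm_int_le_pow_iff_dvd, Nat.cast_pow]

theorem norm_le_of_forall_norm_le_pow {w z : ℤ_[p]}
    (h : ∀ m : ℕ, ‖z‖ ≤ (p : ℝ) ^ (-(m : ℤ)) → ‖w‖ ≤ (p : ℝ) ^ (-(m : ℤ))) : ‖w‖ ≤ ‖z‖ := by
  rcases eq_or_ne z 0 with rfl | hz
  · suffices w = 0 by simp [this]
    by_contra hw
    have := h (w.valuation + 1) (by rw [norm_zero]; positivity)
    rw [norm_le_pow_iff_le_valuation w hw] at this
    omega
  · rw [norm_eq_zpow_neg_valuation hz]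
    exact h _ (norm_eq_zpow_neg_valuation hz).le

theorem forall_norm_sub_le_of_natCast {f : ℤ_[p] → ℤ_[p]} (hf : Continuous f)
    (h : ∀ a b : ℕ, ‖f a - f b‖ ≤ ‖(a : ℤ_[p]) - b‖) (x y : ℤ_[p]) :
    ‖f x - f y‖ ≤ ‖x - y‖ :=
  denseRange_natCast.induction_on₂ (isClosed_le (by fun_prop) (by fun_prop)) h x y

end PadicInt

section VanDerPut

variable {p : ℕ} {E : Type*} [SeminormedAddCommGroup E] [IsUltrametricDist E]

theorem norm_sub_mod_pow_le_of_vanDerPut (hp : 1 < p) {g : ℕ → E}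
    (H : ∀ n : ℕ, p ≤ n → ‖g n - g (n % p ^ Nat.log p n)‖ ≤ (p : ℝ) ^ (-(Nat.log p n : ℤ)))
    {m : ℕ} (hm : 0 < m) (a : ℕ) : ‖g a - g (a % p ^ m)‖ ≤ (p : ℝ) ^ (-(m : ℤ)) := by
  induction a using Nat.strong_induction_on with
  | _ a ih =>
    rcases lt_or_ge a (p ^ m) with ha | ha
    · simp [Nat.mod_eq_of_lt ha]
    set k := Nat.log p a
    have hmk : m ≤ k := Nat.le_log_of_pow_le hp ha
    have hpa : p ≤ a := (Nat.le_self_pow hm.ne' p).trans ha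
    have hlt : a % p ^ k < a :=
      (Nat.mod_lt _ (by positivity)).trans_le (Nat.pow_log_le_self p (by omega))
    have hmod : a % p ^ k % p ^ m = a % p ^ m := Nat.mod_mod_of_dvd a (pow_dvd_pow p hmk)
    calc ‖g a - g (a % p ^ m)‖
        = ‖(g a - g (a % p ^ k)) + (g (a % p ^ k) - g (a % p ^ k % p ^ m))‖ := by
          rw [hmod, sub_add_sub_cancel]
      _ ≤ max ‖g a - g (a % p ^ k)‖ ‖g (a % p ^ k) - g (a % p ^ k % p ^ m)‖ :=
          IsUltrametricDist.norm_add_le_max _ _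
      _ ≤ (p : ℝ) ^ (-(m : ℤ)) :=
          max_le ((H a hpa).trans (zpow_le_zpow_right₀ (by exact_mod_cast hp.le) (by omega)))
            (ih _ hlt)

theorem norm_sub_le_of_vanDerPut_of_modEq (hp : 1 < p) {g : ℕ → E}
    (H : ∀ n : ℕ, p ≤ n → ‖g n - g (n % p ^ Nat.log p n)‖ ≤ (p : ℝ) ^ (-(Nat.log p n : ℤ)))
    {m : ℕ} (hm : 0 < m) {a b : ℕ} (hab : a ≡ b [MOD p ^ m]) :
    ‖g a - g b‖ ≤ (p : ℝ) ^ (-(m : ℤ)) := by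
  have hb := norm_sub_mod_pow_le_of_vanDerPut hp H hm b
  rw [norm_sub_rev, ← hab] at hb
  calc ‖g a - g b‖ = ‖(g a - g (a % p ^ m)) + (g (a % p ^ m) - g b)‖ := by
        rw [sub_add_sub_cancel]
    _ ≤ _ := IsUltrametricDist.norm_add_le_max _ _
    _ ≤ _ := max_le (norm_sub_mod_pow_le_of_vanDerPut hp H hm a) hb

end VanDerPut

theorem pow_log_dvd_vdpB_iff {p : ℕ} [Fact p.Prime] (f : ℤ_[p] → ℤ_[p]) (n : ℕ) :
    (p : ℤ_[p]) ^ Nat.log p n ∣ vdpB p f n ↔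
      (p ≤ n → ‖f n - f ((n % p ^ Nat.log p n : ℕ))‖ ≤ (p : ℝ) ^ (-(Nat.log p n : ℤ))) := by
  rcases lt_or_ge n p with hn | hn
  · simp [Nat.log_eq_zero_iff.mpr (Or.inl hn), hn]
  · rw [vdpB, if_neg hn.not_gt, ← Ideal.mem_span_singleton,
      ← PadicInt.norm_le_pow_iff_mem_span_pow]
    exact ⟨fun h _ => h, fun h => h hn⟩

/-- A continuous `f : ℤ_p → ℤ_p` is 1-Lipschitz iff
`‖f(n) - f(n mod p^⌊log_p n⌋)‖ ≤ p^{-⌊log_p n⌋}` for every `n ≥ p`, i.e. iff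
`p^{k(n)}` divides the van der Put coefficient `B^f_n` in `ℤ_p` for every `n ≥ 1`. -/
theorem oneLipschitz_iff_vanDerPut (p : ℕ) [Fact p.Prime]
    (f : PadicInt p → PadicInt p) (hf : Continuous f) :
    ((∀ x y : PadicInt p, ‖f x - f y‖ ≤ ‖x - y‖) ↔
      (∀ n : ℕ, p ≤ n →
        ‖f n - f ((n % p ^ Nat.log p n : ℕ))‖ ≤ (p : ℝ) ^ (-(Nat.log p n : ℤ)))) ∧
    ((∀ x y : PadicInt p, ‖f x - f y‖ ≤ ‖x - y‖) ↔
      (∀ n : ℕ, 1 ≤ n → (p : PadicInt p) ^ Nat.log p n ∣ vdpB p f n)) := by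
  have hp : 1 < p := (Fact.out : p.Prime).one_lt
  have lipschitz_iff : (∀ x y : PadicInt p, ‖f x - f y‖ ≤ ‖x - y‖) ↔
      (∀ n : ℕ, p ≤ n →
        ‖f n - f ((n % p ^ Nat.log p n : ℕ))‖ ≤ (p : ℝ) ^ (-(Nat.log p n : ℤ))) := by
    refine ⟨fun hL n _ => ?_, fun H => ?_⟩
    · exact (hL _ _).trans
        (PadicInt.norm_natCast_sub_le_pow_iff_modEq.mpr (Nat.mod_modEq n _).symm)
    · refine PadicInt.forall_norm_sub_le_of_natCast hf fun a b =>
        PadicInt.norm_le_of_forall_norm_le_pow fun m hab => ?_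
      rcases Nat.eq_zero_or_pos m with rfl | hm
      · simpa using PadicInt.norm_le_one _
      · exact norm_sub_le_of_vanDerPut_of_modEq hp H hm
          (PadicInt.norm_natCast_sub_le_pow_iff_modEq.mp hab)
  refine ⟨lipschitz_iff, lipschitz_iff.trans ?_⟩
  simp only [pow_log_dvd_vdpB_iff]
  exact ⟨fun H n _ => H n, fun H n hn => H n (hp.le.trans hn) hn⟩
end

section
/- Let p be a prime, f : ℤ_p → ℤ_p a 1-Lipschitz function, k ≥ 0 an integer and m an integer with 0 ≤ m < p^k. Then there exists exactly one pair (r, h), consisting of an integer r with 0 ≤ r < p^k and a function h : ℤ_p → ℤ_p, such that f(m + p^k·y) = r + p^k·h(y) for all y ∈ ℤ_p; moreover the function h (the section of f at the vertex (k, m)) is again 1-Lipschitz. -/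
/-- For a 1-Lipschitz `f : ℤ_p → ℤ_p`, an integer `k ≥ 0` and `0 ≤ m < p^k`, there is
exactly one pair `(r, h)` with `r` an integer, `0 ≤ r < p^k`, and `h : ℤ_p → ℤ_p`, such
that `f(m + p^k·y) = r + p^k·h(y)` for all `y`; moreover the section `h` is 1-Lipschitz. -/
theorem section_exists_unique_and_lipschitz (p : ℕ) [Fact p.Prime]
    (f : PadicInt p → PadicInt p)
    (hf : ∀ x y : PadicInt p, ‖f x - f y‖ ≤ ‖x - y‖)
    (k m : ℕ) (hm : m < p ^ k) :
    (∃! rh : ℤ × (PadicInt p → PadicInt p),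
      0 ≤ rh.1 ∧ rh.1 < (p : ℤ) ^ k ∧
      ∀ y : PadicInt p,
        f ((m : PadicInt p) + (p : PadicInt p) ^ k * y)
          = (rh.1 : PadicInt p) + (p : PadicInt p) ^ k * rh.2 y) ∧
    (∀ (r : ℤ) (h : PadicInt p → PadicInt p),
      0 ≤ r → r < (p : ℤ) ^ k →
      (∀ y : PadicInt p,
        f ((m : PadicInt p) + (p : PadicInt p) ^ k * y)
          = (r : PadicInt p) + (p : PadicInt p) ^ k * h y) →
      ∀ x y : PadicInt p, ‖h x - h y‖ ≤ ‖x - y‖) := by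
  have hp : (p : ℝ) ^ (-(k : ℤ)) > 0 := by
    have : (0:ℝ) < p := by exact_mod_cast (Fact.out : p.Prime).pos
    positivity
  set g : PadicInt p → PadicInt p :=
    fun y => f ((m : PadicInt p) + (p : PadicInt p) ^ k * y) with hgdef
  have hnormpk : ‖(p : PadicInt p) ^ k‖ = (p : ℝ) ^ (-(k : ℤ)) := PadicInt.norm_p_pow k
  have hpkpos : (0:ℝ) < ‖(p : PadicInt p) ^ k‖ := by rw [hnormpk]; exact hp
  have hg : ∀ x y, ‖g x - g y‖ ≤ ‖(p : PadicInt p) ^ k‖ * ‖x - y‖ := by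
    intro x y
    calc ‖g x - g y‖ ≤ ‖((m : PadicInt p) + (p : PadicInt p) ^ k * x)
          - ((m : PadicInt p) + (p : PadicInt p) ^ k * y)‖ := hf _ _
      _ = ‖(p : PadicInt p) ^ k * (x - y)‖ := by ring_nf
      _ = ‖(p : PadicInt p) ^ k‖ * ‖x - y‖ := norm_mul _ _
  -- divisibility: p^k ∣ g y - r for r = appr of g 0
  set r : ℕ := (g 0).appr k with hrdef
  have hdvd : ∀ y, ∃ c, g y - (r : PadicInt p) = (p : PadicInt p) ^ k * c := by
    intro y
    have h1 : (p : PadicInt p) ^ k ∣ g y - g 0 := by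
      rw [← Ideal.mem_span_singleton, ← PadicInt.norm_le_pow_iff_mem_span_pow]
      calc ‖g y - g 0‖ ≤ ‖(p : PadicInt p) ^ k‖ * ‖y - 0‖ := hg y 0
        _ ≤ ‖(p : PadicInt p) ^ k‖ * 1 := by
            exact mul_le_mul_of_nonneg_left (PadicInt.norm_le_one (y - 0)) hpkpos.le
        _ = (p : ℝ) ^ (-(k:ℤ)) := by rw [mul_one, hnormpk]
    have h2 : (p : PadicInt p) ^ k ∣ g 0 - (r : PadicInt p) := by
      have := PadicInt.appr_spec k (g 0)
      rwa [Ideal.mem_span_singleton] at this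
    have : (p : PadicInt p) ^ k ∣ g y - (r : PadicInt p) := by
      have := dvd_add h1 h2
      simpa using this
    obtain ⟨c, hc⟩ := this
    exact ⟨c, hc⟩
  choose h hh using hdvd
  have hsol : ∀ y, g y = ((r : ℤ) : PadicInt p) + (p : PadicInt p) ^ k * h y := by
    intro y
    have := hh y
    push_cast
    linear_combination this
  have hpkne : ((p : PadicInt p) ^ k) ≠ 0 := by
    intro h0
    rw [h0, norm_zero] at hnormpk
    exact absurd hnormpk.symm (ne_of_gt hp)
  -- uniqueness helper: solutions agree
  have huniq : ∀ (r' : ℤ) (h' : PadicInt p → PadicInt p), 0 ≤ r' → r' < (p:ℤ)^k →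
      (∀ y, g y = (r' : PadicInt p) + (p : PadicInt p) ^ k * h' y) →
      r' = (r : ℤ) ∧ h' = h := by
    intro r' h' hr0 hrk hsol'
    have key : ((r : ℤ) : PadicInt p) - (r' : PadicInt p)
        = (p : PadicInt p) ^ k * (h' 0 - h 0) := by
      have e1 := hsol 0
      have e2 := hsol' 0
      linear_combination e2 - e1
    have hdvdint : ((p:ℤ)^k) ∣ ((r:ℤ) - r') := by
      have key2 : (((r:ℤ) - r' : ℤ) : PadicInt p) = (p : PadicInt p) ^ k * (h' 0 - h 0) := by
        push_cast at key ⊢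
        linear_combination key
      have : ‖(((r:ℤ) - r' : ℤ) : PadicInt p)‖ ≤ (p : ℝ) ^ (-(k:ℤ)) := by
        rw [key2, norm_mul, hnormpk]
        calc (p:ℝ)^(-(k:ℤ)) * ‖h' 0 - h 0‖ ≤ (p:ℝ)^(-(k:ℤ)) * 1 :=
            mul_le_mul_of_nonneg_left (PadicInt.norm_le_one _) hp.le
          _ = (p:ℝ)^(-(k:ℤ)) := mul_one _
      rw [PadicInt.norm_int_le_pow_iff_dvd] at this
      exact_mod_cast this
    have hrr' : r' = (r : ℤ) := by
      have hrlt : (r : ℤ) < (p:ℤ)^k := by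
        exact_mod_cast PadicInt.appr_lt (g 0) k
      have := Int.eq_zero_of_abs_lt_dvd hdvdint (by
        rw [abs_lt]; constructor <;> omega)
      omega
    refine ⟨hrr', funext fun y => ?_⟩
    have e1 := hsol y
    have e2 := hsol' y
    rw [hrr'] at e2
    have : (p : PadicInt p) ^ k * h' y = (p : PadicInt p) ^ k * h y := by
      linear_combination e1 - e2
    exact mul_left_cancel₀ hpkne this
  constructor
  · refine ⟨((r : ℤ), h), ⟨Int.ofNat_nonneg r, show (r:ℤ) < (p:ℤ)^k by exact_mod_cast PadicInt.appr_lt (g 0) k,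
      fun y => hsol y⟩, ?_⟩
    rintro ⟨r', h'⟩ ⟨h1, h2, h3⟩
    obtain ⟨e1, e2⟩ := huniq r' h' h1 h2 h3
    simp [e1, e2]
  · intro r' h' hr0 hrk hsol' x y
    have key : (p : PadicInt p) ^ k * (h' x - h' y) = g x - g y := by
      have e1 := hsol' x
      have e2 := hsol' y
      linear_combination e2 - e1
    have : ‖(p : PadicInt p) ^ k‖ * ‖h' x - h' y‖ ≤ ‖(p : PadicInt p) ^ k‖ * ‖x - y‖ := by
      rw [← norm_mul, key]
      exact hg x y
    exact le_of_mul_le_mul_left this hpkpos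
end

section
/- Let p be a prime, f : ℤ_p → ℤ_p a 1-Lipschitz function, x an integer with 0 ≤ x < p, and h the section of f at the vertex (1, x). Then the reduced van der Put coefficients of h satisfy: b^h_0 = σ(b^f_x); b^h_n = b^f_{x + n·p} + σ(b^f_x) for every integer n with 1 ≤ n ≤ p − 1; and b^h_n = b^f_{x + n·p} for every integer n ≥ p. -/
theorem Nat.log_add_mul_base {b x n : ℕ} (hb : 1 < b) (hx : x < b) (hn : n ≠ 0) :
    Nat.log b (x + n * b) = Nat.log b n + 1 := by
  have hle : b ≤ x + n * b :=
    (Nat.le_mul_of_pos_left b (Nat.pos_of_ne_zero hn)).trans (Nat.le_add_left _ _)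
  rw [Nat.log_of_one_lt_of_le hb hle, Nat.add_mul_div_right _ _ (by omega),
    Nat.div_eq_of_lt hx, zero_add]

theorem Nat.add_mul_base_mod_pow_succ {b x : ℕ} (hx : x < b) (n k : ℕ) :
    (x + n * b) % b ^ (k + 1) = x + n % b ^ k * b := by
  rw [pow_succ', Nat.mod_mul, Nat.add_mul_mod_self_right, Nat.mod_eq_of_lt hx,
    Nat.add_mul_div_right _ _ (by omega), Nat.div_eq_of_lt hx, zero_add, mul_comm]

namespace PadicInt

variable {p : ℕ} [Fact p.Prime]

theorem eq_of_natCast_add_p_mul_eq {r r' : ℕ} (hr : r < p) (hr' : r' < p) {a b : ℤ_[p]}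
    (h : (r : ℤ_[p]) + p * a = r' + p * b) : r = r' ∧ a = b := by
  have hmod : (r : ZMod p) = r' := by simpa using congrArg PadicInt.toZMod h
  rw [ZMod.natCast_eq_natCast_iff', Nat.mod_eq_of_lt hr, Nat.mod_eq_of_lt hr'] at hmod
  subst hmod
  exact ⟨rfl, mul_left_cancel₀ (Nat.cast_ne_zero.mpr (Fact.out : p.Prime).ne_zero)
    (add_left_cancel h)⟩

end PadicInt

section VanDerPut

variable {p : ℕ} [Fact p.Prime]

theorem vdpB_of_lt (f : ℤ_[p] → ℤ_[p]) {n : ℕ} (hn : n < p) : vdpB p f n = f n :=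
  if_pos hn

theorem vdpB_of_le (f : ℤ_[p] → ℤ_[p]) {n : ℕ} (hn : p ≤ n) :
    vdpB p f n = f n - f ((n % p ^ Nat.log p n : ℕ)) :=
  if_neg (not_lt.mpr hn)

theorem eq_of_pow_log_mul_eq_vdpB_of_lt {f : ℤ_[p] → ℤ_[p]} {b : ℕ → ℤ_[p]}
    (hb : ∀ n : ℕ, (p : ℤ_[p]) ^ Nat.log p n * b n = vdpB p f n) {n : ℕ} (hn : n < p) :
    b n = f n := by
  simpa [Nat.log_of_lt hn, vdpB_of_lt f hn] using hb n

theorem vdpB_add_mul_p_of_section {f h : ℤ_[p] → ℤ_[p]} {x r : ℕ} (hx : x < p)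
    (hsec : ∀ y : ℤ_[p], f (x + p * y) = r + p * h y) {n : ℕ} (hn : n ≠ 0) :
    vdpB p f (x + n * p) = p * (h n - h ((n % p ^ Nat.log p n : ℕ))) := by
  have hp := (Fact.out : p.Prime)
  have hcast : ∀ m : ℕ, ((x + m * p : ℕ) : ℤ_[p]) = x + p * m := fun m => by push_cast; ring
  rw [vdpB_of_le f (le_add_left (Nat.le_mul_of_pos_left p (Nat.pos_of_ne_zero hn))),
    Nat.log_add_mul_base hp.one_lt hx hn, Nat.add_mul_base_mod_pow_succ hx, hcast, hcast,
    hsec, hsec]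
  ring

end VanDerPut

theorem reduced_vanDerPut_of_section_level_one_general (p : ℕ) [Fact p.Prime]
    (f h : PadicInt p → PadicInt p)
    (x : ℕ) (hx : x < p)
    -- `h` is the section of `f` at the vertex `(1, x)`
    (hsec : ∃ r : ℕ, r < p ∧ ∀ y : PadicInt p,
      f ((x : PadicInt p) + (p : PadicInt p) * y)
        = (r : PadicInt p) + (p : PadicInt p) * h y)
    -- `σ` is the digit shift on `ℤ_p`
    (σ : PadicInt p → PadicInt p)
    (hσ : ∀ a : PadicInt p, ∃ r : ℕ, r < p ∧ a = (r : PadicInt p) + (p : PadicInt p) * σ a)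
    -- reduced van der Put coefficients of `f` and of `h`
    (bf bh : ℕ → PadicInt p)
    (hbf : ∀ n : ℕ, (p : PadicInt p) ^ Nat.log p n * bf n = vdpB p f n)
    (hbh : ∀ n : ℕ, (p : PadicInt p) ^ Nat.log p n * bh n = vdpB p h n) :
    bh 0 = σ (bf x) ∧
    (∀ n : ℕ, 1 ≤ n → n ≤ p - 1 → bh n = bf (x + n * p) + σ (bf x)) ∧
    (∀ n : ℕ, p ≤ n → bh n = bf (x + n * p)) := by
  have hp := (Fact.out : p.Prime)
  obtain ⟨r, hr, hsec⟩ := hsec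
  obtain ⟨r', hr', hσx⟩ := hσ (bf x)
  have hh0 : h 0 = σ (bf x) := by
    refine (PadicInt.eq_of_natCast_add_p_mul_eq hr hr' ?_).2
    rw [← hσx, eq_of_pow_log_mul_eq_vdpB_of_lt hbf hx, ← hsec 0, mul_zero, add_zero]
  have hbf_section : ∀ n : ℕ, n ≠ 0 →
      (p : ℤ_[p]) ^ Nat.log p n * bf (x + n * p) = h n - h ((n % p ^ Nat.log p n : ℕ)) := by
    intro n hn
    refine mul_left_cancel₀ (Nat.cast_ne_zero.mpr hp.ne_zero) ?_
    rw [← vdpB_add_mul_p_of_section hx hsec hn, ← hbf, ← mul_assoc, ← pow_succ',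
      Nat.log_add_mul_base hp.one_lt hx hn]
  refine ⟨?_, fun n hn1 hn2 => ?_, fun n hpn => ?_⟩
  · rw [eq_of_pow_log_mul_eq_vdpB_of_lt hbh hp.pos, Nat.cast_zero, hh0]
  · have hnp : n < p := by omega
    have hdiff := hbf_section n (by omega)
    rw [Nat.log_of_lt hnp, pow_zero, one_mul, pow_zero, Nat.mod_one, Nat.cast_zero, hh0] at hdiff
    rw [eq_of_pow_log_mul_eq_vdpB_of_lt hbh hnp, hdiff, sub_add_cancel]
  · refine mul_left_cancel₀ (pow_ne_zero (Nat.log p n) (Nat.cast_ne_zero.mpr hp.ne_zero)) ?_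
    rw [hbh, vdpB_of_le h hpn, hbf_section n (by omega)]

/-- Reduced van der Put coefficients of the section of a 1-Lipschitz map at a first-level
vertex `x` (with `0 ≤ x < p`):
`b^h_0 = σ(b^f_x)`, `b^h_n = b^f_{x+np} + σ(b^f_x)` for `1 ≤ n ≤ p-1`, and
`b^h_n = b^f_{x+np}` for `n ≥ p`, where `σ` is the digit shift on `ℤ_p`. -/
theorem reduced_vanDerPut_of_section_level_one (p : ℕ) [Fact p.Prime]
    (f h : PadicInt p → PadicInt p)
    (hf : ∀ x y : PadicInt p, ‖f x - f y‖ ≤ ‖x - y‖)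
    (x : ℕ) (hx : x < p)
    -- `h` is the section of `f` at the vertex `(1, x)`
    (hsec : ∃ r : ℕ, r < p ∧ ∀ y : PadicInt p,
      f ((x : PadicInt p) + (p : PadicInt p) * y)
        = (r : PadicInt p) + (p : PadicInt p) * h y)
    -- `σ` is the digit shift on `ℤ_p`
    (σ : PadicInt p → PadicInt p)
    (hσ : ∀ a : PadicInt p, ∃ r : ℕ, r < p ∧ a = (r : PadicInt p) + (p : PadicInt p) * σ a)
    -- reduced van der Put coefficients of `f` and of `h`
    (bf bh : ℕ → PadicInt p)
    (hbf : ∀ n : ℕ, (p : PadicInt p) ^ Nat.log p n * bf n = vdpB p f n)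
    (hbh : ∀ n : ℕ, (p : PadicInt p) ^ Nat.log p n * bh n = vdpB p h n) :
    bh 0 = σ (bf x) ∧
    (∀ n : ℕ, 1 ≤ n → n ≤ p - 1 → bh n = bf (x + n * p) + σ (bf x)) ∧
    (∀ n : ℕ, p ≤ n → bh n = bf (x + n * p)) :=
  reduced_vanDerPut_of_section_level_one_general p f h x hx hsec σ hσ bf bh hbf hbh
end

section
/- Let p be a prime, f : ℤ_p → ℤ_p a 1-Lipschitz function, x an integer with 0 ≤ x < p, and h the section of f at the vertex (1, x). Then the Schikhof reduced van der Put coefficients satisfy: b̃^h_0 = σ(b̃^f_0) if x = 0; b̃^h_0 = σ(b̃^f_x + b̃^f_0) if 1 ≤ x ≤ p − 1; and b̃^h_n = b̃^f_{x + n·p} for every integer n ≥ 1. -/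
/-!
Write `f (x + p y) = r + p h(y)`. At `y = 0` this says that `h 0` is the digit shift of `f x`,
and `f x` is `b̃^f_0` when `x = 0` and `b̃^f_x + b̃^f_0` otherwise. For `n ≥ 1` the base-`p`
digits of `x + n p` are `x` followed by those of `n`, so `k(x + n p) = k(n) + 1` and
`(x + n p)_− = x + n_− p`; hence `p^{k(n)+1} b̃^f_{x+np} = f(x + n p) - f(x + n_− p)
= p (h n - h n_−) = p^{k(n)+1} b̃^h_n`.
-/

/-- `bt` is the sequence of Schikhof reduced van der Put coefficients of `f`:
`b̃^f_0 = f(0)` and, for `n ≥ 1`, `p^⌊log_p n⌋ · b̃^f_n = f(n) - f(n mod p^⌊log_p n⌋)`. -/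
def IsSchikhofReduced (p : ℕ) [Fact p.Prime] (f : PadicInt p → PadicInt p)
    (bt : ℕ → PadicInt p) : Prop :=
  bt 0 = f 0 ∧
  ∀ n : ℕ, 1 ≤ n →
    (p : PadicInt p) ^ Nat.log p n * bt n = f n - f ((n % p ^ Nat.log p n : ℕ))

namespace Nat

theorem log_add_mul_base_s4 {b x n : ℕ} (hb : 1 < b) (hx : x < b) (hn : n ≠ 0) :
    log b (x + n * b) = log b n + 1 := by
  have hdiv : (x + n * b) / b = n := by
    rw [Nat.add_mul_div_right _ _ (by omega), Nat.div_eq_of_lt hx, zero_add]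
  have hpos : 0 < log b (x + n * b) :=
    log_pos hb (by nlinarith [Nat.one_le_iff_ne_zero.mpr hn])
  have := log_div_base b (x + n * b)
  rw [hdiv] at this
  omega

theorem add_mul_base_mod_pow_succ_s4 {b x : ℕ} (n k : ℕ) (hx : x < b) :
    (x + n * b) % b ^ (k + 1) = x + n % b ^ k * b := by
  rw [pow_succ', Nat.mod_mul, Nat.add_mul_div_right _ _ (by omega), Nat.div_eq_of_lt hx,
    zero_add, Nat.add_mul_mod_self_right, Nat.mod_eq_of_lt hx, mul_comm b]

end Nat

namespace PadicInt

variable {p : ℕ} [Fact p.Prime]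

theorem eq_of_natCast_add_mul_eq {r s : ℕ} (hr : r < p) (hs : s < p) {a b : ℤ_[p]}
    (h : (r : ℤ_[p]) + p * a = s + p * b) : a = b := by
  have hrs : r = s := by
    have hmod := congrArg toZMod h
    simp only [map_add, map_mul, map_natCast, ZMod.natCast_self, zero_mul, add_zero] at hmod
    rwa [ZMod.natCast_eq_natCast_iff', Nat.mod_eq_of_lt hr, Nat.mod_eq_of_lt hs] at hmod
  subst hrs
  exact mul_left_cancel₀ (Nat.cast_ne_zero.mpr (Fact.out : p.Prime).ne_zero) (add_left_cancel h)

theorem shift_eq_of_eq_natCast_add_mul {σ : ℤ_[p] → ℤ_[p]}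
    (hσ : ∀ a : ℤ_[p], ∃ r : ℕ, r < p ∧ a = r + p * σ a) {a b : ℤ_[p]} {r : ℕ} (hr : r < p)
    (hab : a = r + p * b) : σ a = b := by
  obtain ⟨s, hs, ha⟩ := hσ a
  exact eq_of_natCast_add_mul_eq hs hr (ha.symm.trans hab)

end PadicInt

namespace IsSchikhofReduced

variable {p : ℕ} [Fact p.Prime] {f : ℤ_[p] → ℤ_[p]} {bt : ℕ → ℤ_[p]}

theorem add_apply_zero_of_lt (hbt : IsSchikhofReduced p f bt) {x : ℕ} (hx1 : 1 ≤ x)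
    (hx : x < p) : bt x + bt 0 = f x := by
  have hx' := hbt.2 x hx1
  rw [Nat.log_eq_zero_iff.mpr (Or.inl hx), pow_zero, one_mul, pow_zero, Nat.mod_one,
    Nat.cast_zero] at hx'
  rw [hx', hbt.1, sub_add_cancel]

theorem eq_of_pow_log_mul_eq (hbt : IsSchikhofReduced p f bt) {n : ℕ} (hn : 1 ≤ n)
    {c : ℤ_[p]} (hc : (p : ℤ_[p]) ^ Nat.log p n * c = f n - f ((n % p ^ Nat.log p n : ℕ))) :
    bt n = c :=
  mul_left_cancel₀ (pow_ne_zero _ (Nat.cast_ne_zero.mpr (Fact.out : p.Prime).ne_zero))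
    ((hbt.2 n hn).trans hc.symm)

end IsSchikhofReduced

theorem schikhof_reduced_vanDerPut_of_section_level_one_general (p : ℕ) [Fact p.Prime]
    (f h : PadicInt p → PadicInt p)
    (x : ℕ) (hx : x < p)
    -- `h` is the section of `f` at the vertex `(1, x)`
    (hsec : ∃ r : ℕ, r < p ∧ ∀ y : PadicInt p,
      f ((x : PadicInt p) + (p : PadicInt p) * y)
        = (r : PadicInt p) + (p : PadicInt p) * h y)
    -- `σ` is the digit shift on `ℤ_p`
    (σ : PadicInt p → PadicInt p)
    (hσ : ∀ a : PadicInt p, ∃ r : ℕ, r < p ∧ a = (r : PadicInt p) + (p : PadicInt p) * σ a)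
    -- Schikhof reduced van der Put coefficients of `f` and of `h`
    (btf bth : ℕ → PadicInt p)
    (hbtf : IsSchikhofReduced p f btf) (hbth : IsSchikhofReduced p h bth) :
    (x = 0 → bth 0 = σ (btf 0)) ∧
    (1 ≤ x → x ≤ p - 1 → bth 0 = σ (btf x + btf 0)) ∧
    (∀ n : ℕ, 1 ≤ n → bth n = btf (x + n * p)) := by
  obtain ⟨r, hr, hsec⟩ := hsec
  have hp : 1 < p := (Fact.out : p.Prime).one_lt
  have hσfx : σ (f x) = bth 0 := by
    rw [hbth.1]
    exact PadicInt.shift_eq_of_eq_natCast_add_mul hσ hr (by simpa using hsec 0)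
  refine ⟨fun hx0 => ?_, fun hx1 _ => ?_, fun n hn => ?_⟩
  · subst hx0
    rw [hbtf.1, ← hσfx, Nat.cast_zero]
  · rw [hbtf.add_apply_zero_of_lt hx1 hx, hσfx]
  · refine (hbtf.eq_of_pow_log_mul_eq (by nlinarith) ?_).symm
    have hcast : ∀ m : ℕ, ((x + m * p : ℕ) : ℤ_[p]) = x + p * m := fun m => by push_cast; ring
    rw [Nat.log_add_mul_base_s4 hp hx (by omega), Nat.add_mul_base_mod_pow_succ_s4 _ _ hx, hcast,
      hcast, hsec, hsec, pow_succ', mul_assoc, hbth.2 n hn]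
    ring

/-- Schikhof reduced van der Put coefficients of the section of a 1-Lipschitz map at a
first-level vertex `x` (with `0 ≤ x < p`): `b̃^h_0 = σ(b̃^f_0)` if `x = 0`,
`b̃^h_0 = σ(b̃^f_x + b̃^f_0)` if `1 ≤ x ≤ p-1`, and `b̃^h_n = b̃^f_{x+np}` for `n ≥ 1`. -/
theorem schikhof_reduced_vanDerPut_of_section_level_one (p : ℕ) [Fact p.Prime]
    (f h : PadicInt p → PadicInt p)
    (hf : ∀ x y : PadicInt p, ‖f x - f y‖ ≤ ‖x - y‖)
    (x : ℕ) (hx : x < p)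
    -- `h` is the section of `f` at the vertex `(1, x)`
    (hsec : ∃ r : ℕ, r < p ∧ ∀ y : PadicInt p,
      f ((x : PadicInt p) + (p : PadicInt p) * y)
        = (r : PadicInt p) + (p : PadicInt p) * h y)
    -- `σ` is the digit shift on `ℤ_p`
    (σ : PadicInt p → PadicInt p)
    (hσ : ∀ a : PadicInt p, ∃ r : ℕ, r < p ∧ a = (r : PadicInt p) + (p : PadicInt p) * σ a)
    -- Schikhof reduced van der Put coefficients of `f` and of `h`
    (btf bth : ℕ → PadicInt p)
    (hbtf : IsSchikhofReduced p f btf) (hbth : IsSchikhofReduced p h bth) :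
    (x = 0 → bth 0 = σ (btf 0)) ∧
    (1 ≤ x → x ≤ p - 1 → bth 0 = σ (btf x + btf 0)) ∧
    (∀ n : ℕ, 1 ≤ n → bth n = btf (x + n * p)) :=
  schikhof_reduced_vanDerPut_of_section_level_one_general p f h x hx hsec σ hσ btf bth hbtf hbth
end

section
/- Let p be a prime, f : ℤ_p → ℤ_p a 1-Lipschitz function, k ≥ 0 an integer, m an integer with 0 ≤ m < p^k, and h the section of f at the vertex (k, m). Then for every integer n ≥ p the reduced van der Put coefficients satisfy b^h_n = b^f_{m + n·p^k}. -/
namespace Nat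

theorem log_add_mul_pow {b k m n : ℕ} (hb : 1 < b) (hm : m < b ^ k) (hn : n ≠ 0) :
    Nat.log b (m + n * b ^ k) = Nat.log b n + k := by
  apply Nat.log_eq_of_pow_le_of_lt_pow
  · calc b ^ (Nat.log b n + k) = b ^ Nat.log b n * b ^ k := pow_add ..
      _ ≤ n * b ^ k := by gcongr; exact Nat.pow_log_le_self b hn
      _ ≤ m + n * b ^ k := Nat.le_add_left ..
  · calc m + n * b ^ k < (n + 1) * b ^ k := by linarith
      _ ≤ b ^ (Nat.log b n + 1) * b ^ k := by gcongr; exact Nat.lt_pow_succ_log_self hb n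
      _ = b ^ (Nat.log b n + k + 1) := by ring

theorem add_mul_mod_mul {a b m n : ℕ} (hm : m < b) :
    (m + n * b) % (b * a) = m + n % a * b := by
  have hb : 0 < b := by omega
  rw [Nat.mod_mul, Nat.add_mul_mod_self_right, Nat.mod_eq_of_lt hm,
    Nat.add_mul_div_right _ _ hb, Nat.div_eq_of_lt hm, zero_add, mul_comm b]

end Nat

theorem vdpB_add_mul_pow_of_section {p : ℕ} [hp : Fact p.Prime] {f h : PadicInt p → PadicInt p}
    {k m r : ℕ} (hm : m < p ^ k)
    (hsec : ∀ y : PadicInt p,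
      f ((m : PadicInt p) + (p : PadicInt p) ^ k * y)
        = (r : PadicInt p) + (p : PadicInt p) ^ k * h y)
    {n : ℕ} (hn : p ≤ n) :
    vdpB p f (m + n * p ^ k) = (p : PadicInt p) ^ k * vdpB p h n := by
  have hsec' : ∀ j : ℕ, f ((m + j * p ^ k : ℕ) : PadicInt p) = r + p ^ k * h j := by
    intro j
    push_cast
    rw [mul_comm, hsec]
  have hp1 : 1 < p := hp.out.one_lt
  have hN : ¬ m + n * p ^ k < p := by
    have : n ≤ n * p ^ k := Nat.le_mul_of_pos_right n (pow_pos hp.out.pos k)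
    omega
  rw [vdpB, vdpB, if_neg hN, if_neg (by omega), Nat.log_add_mul_pow hp1 hm (by omega),
    pow_add, mul_comm (p ^ _), Nat.add_mul_mod_mul hm, hsec', hsec']
  ring

theorem reduced_vanDerPut_of_section_general (p : ℕ) [Fact p.Prime]
    (f h : PadicInt p → PadicInt p)
    (k m : ℕ) (hm : m < p ^ k)
    -- `h` is the section of `f` at the vertex `(k, m)`
    (hsec : ∃ r : ℕ, r < p ^ k ∧ ∀ y : PadicInt p,
      f ((m : PadicInt p) + (p : PadicInt p) ^ k * y)
        = (r : PadicInt p) + (p : PadicInt p) ^ k * h y)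
    -- reduced van der Put coefficients of `f` and of `h`
    (bf bh : ℕ → PadicInt p)
    (hbf : ∀ n : ℕ, (p : PadicInt p) ^ Nat.log p n * bf n = vdpB p f n)
    (hbh : ∀ n : ℕ, (p : PadicInt p) ^ Nat.log p n * bh n = vdpB p h n) :
    ∀ n : ℕ, p ≤ n → bh n = bf (m + n * p ^ k) := by
  obtain ⟨r, -, hsec⟩ := hsec
  intro n hn
  have hp : 1 < p := (Fact.out : p.Prime).one_lt
  have hpow : (p : PadicInt p) ^ (Nat.log p n + k) ≠ 0 :=
    pow_ne_zero _ (Nat.cast_ne_zero.mpr (by omega))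
  apply mul_left_cancel₀ hpow
  calc (p : PadicInt p) ^ (Nat.log p n + k) * bh n = p ^ k * vdpB p h n := by
        rw [← hbh, pow_add]; ring
    _ = vdpB p f (m + n * p ^ k) := (vdpB_add_mul_pow_of_section hm hsec hn).symm
    _ = p ^ (Nat.log p n + k) * bf (m + n * p ^ k) := by
        rw [← hbf, Nat.log_add_mul_pow hp hm (by omega)]

/-- If `h` is the section of a 1-Lipschitz `f : ℤ_p → ℤ_p` at a vertex `(k, m)` with
`0 ≤ m < p^k`, then the reduced van der Put coefficients satisfy
`b^h_n = b^f_{m + n·p^k}` for every `n ≥ p`. -/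
theorem reduced_vanDerPut_of_section (p : ℕ) [Fact p.Prime]
    (f h : PadicInt p → PadicInt p)
    (hf : ∀ x y : PadicInt p, ‖f x - f y‖ ≤ ‖x - y‖)
    (k m : ℕ) (hm : m < p ^ k)
    -- `h` is the section of `f` at the vertex `(k, m)`
    (hsec : ∃ r : ℕ, r < p ^ k ∧ ∀ y : PadicInt p,
      f ((m : PadicInt p) + (p : PadicInt p) ^ k * y)
        = (r : PadicInt p) + (p : PadicInt p) ^ k * h y)
    -- reduced van der Put coefficients of `f` and of `h`
    (bf bh : ℕ → PadicInt p)
    (hbf : ∀ n : ℕ, (p : PadicInt p) ^ Nat.log p n * bf n = vdpB p f n)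
    (hbh : ∀ n : ℕ, (p : PadicInt p) ^ Nat.log p n * bh n = vdpB p h n) :
    ∀ n : ℕ, p ≤ n → bh n = bf (m + n * p ^ k) :=
  reduced_vanDerPut_of_section_general p f h k m hm hsec bf bh hbf hbh
end

section
/- Let p be a prime, m ≥ 1 an integer and x ∈ ℤ_p. The digit expansion (a_i)_{i≥0} of x satisfies a_{i+m} = a_i for all i ≥ 0 (i.e. is purely periodic with period dividing m) if and only if there exists an integer j with 0 ≤ j < p^m such that (1 − p^m)·x = j in ℤ_p. -/
/-!
If the digits are `m`-periodic, then `x = j + p^m x` with `j = ∑_{i<m} a_i p^i < p^m`.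
Conversely, the `m`-periodic sequence repeating the `m` base-`p` digits of `j` defines some
`y ∈ ℤ_p` with `(1 - p^m) y = j`; since `1 - p^m ≠ 0` (it is `1` modulo `p`), `y = x`, and
uniqueness of digit expansions makes the digits of `x` periodic.
-/

open Finset

theorem Nat.sum_range_div_pow_mod_mul_pow (b x n : ℕ) :
    ∑ i ∈ range n, x / b ^ i % b * b ^ i = x % b ^ n := by
  induction n with
  | zero => simp [Nat.mod_one]
  | succ n ih => rw [sum_range_succ, ih, Nat.mod_pow_succ, mul_comm]

theorem Nat.sum_range_mul_pow_lt {b : ℕ} {a : ℕ → ℕ} (ha : ∀ i, a i < b) (n : ℕ) :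
    ∑ i ∈ range n, a i * b ^ i < b ^ n := by
  induction n with
  | zero => simp
  | succ n ih =>
    calc ∑ i ∈ range (n + 1), a i * b ^ i < b ^ n + a n * b ^ n := by
          rw [sum_range_succ]; omega
      _ = (a n + 1) * b ^ n := by ring
      _ ≤ b ^ (n + 1) := by rw [pow_succ']; exact Nat.mul_le_mul_right _ (ha n)

theorem Nat.exists_periodic_digits {b m j : ℕ} (hb : 0 < b) (hj : j < b ^ m) :
    ∃ d : ℕ → ℕ, (∀ i, d i < b) ∧ (∀ i, d (i + m) = d i) ∧ ∑ i ∈ range m, d i * b ^ i = j := by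
  refine ⟨fun i => j / b ^ (i % m) % b, fun i => Nat.mod_lt _ hb,
    fun i => by simp only [Nat.add_mod_right], ?_⟩
  calc ∑ i ∈ range m, j / b ^ (i % m) % b * b ^ i
      = ∑ i ∈ range m, j / b ^ i % b * b ^ i :=
        sum_congr rfl fun i hi => by rw [Nat.mod_eq_of_lt (mem_range.mp hi)]
    _ = j := by rw [Nat.sum_range_div_pow_mod_mul_pow, Nat.mod_eq_of_lt hj]

namespace PadicInt

variable {p : ℕ} [Fact p.Prime]

theorem summable_mul_p_pow (c : ℕ → ℤ_[p]) : Summable fun i => c i * (p : ℤ_[p]) ^ i := by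
  have hp : (p : ℝ)⁻¹ < 1 := inv_lt_one_of_one_lt₀ (by exact_mod_cast (Fact.out : p.Prime).one_lt)
  refine Summable.of_norm_bounded (summable_geometric_of_lt_one (by positivity) hp) fun i => ?_
  rw [norm_mul, norm_p_pow, zpow_neg, zpow_natCast, inv_pow]
  exact mul_le_of_le_one_left (by positivity) (norm_le_one _)

theorem tsum_mul_p_pow_eq_sum_add (c : ℕ → ℤ_[p]) (n : ℕ) :
    ∑' i, c i * (p : ℤ_[p]) ^ i =
      ∑ i ∈ range n, c i * (p : ℤ_[p]) ^ i + (p : ℤ_[p]) ^ n * ∑' i, c (i + n) * (p : ℤ_[p]) ^ i := by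
  rw [← (summable_mul_p_pow c).sum_add_tsum_nat_add n, ← (summable_mul_p_pow _).tsum_mul_left]
  congr 1
  exact tsum_congr fun i => by ring

theorem tsum_mul_p_pow_eq_add_p_mul (c : ℕ → ℤ_[p]) :
    ∑' i, c i * (p : ℤ_[p]) ^ i = c 0 + p * ∑' i, c (i + 1) * (p : ℤ_[p]) ^ i := by
  simpa using tsum_mul_p_pow_eq_sum_add c 1

theorem one_sub_p_pow_mul_tsum_of_periodic {c : ℕ → ℤ_[p]} {m : ℕ} (hc : ∀ i, c (i + m) = c i) :
    (1 - (p : ℤ_[p]) ^ m) * ∑' i, c i * (p : ℤ_[p]) ^ i = ∑ i ∈ range m, c i * (p : ℤ_[p]) ^ i := by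
  have h := tsum_mul_p_pow_eq_sum_add c m
  simp only [hc] at h
  linear_combination h

theorem toZMod_natCast_add_p_mul (d : ℕ) (t : ℤ_[p]) :
    toZMod ((d : ℤ_[p]) + (p : ℤ_[p]) * t) = (d : ZMod p) := by
  simp

theorem one_sub_p_pow_ne_zero {m : ℕ} (hm : m ≠ 0) : 1 - (p : ℤ_[p]) ^ m ≠ 0 := by
  intro h
  simpa [hm] using congrArg toZMod h

section Digits

variable {a b : ℕ → ℕ}

theorem head_eq_of_tsum_eq (ha : ∀ i, a i < p) (hb : ∀ i, b i < p)
    (h : ∑' i, (a i : ℤ_[p]) * (p : ℤ_[p]) ^ i = ∑' i, (b i : ℤ_[p]) * (p : ℤ_[p]) ^ i) :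
    a 0 = b 0 := by
  have h' := congrArg toZMod h
  rw [tsum_mul_p_pow_eq_add_p_mul (fun i => (a i : ℤ_[p])),
    tsum_mul_p_pow_eq_add_p_mul (fun i => (b i : ℤ_[p])), toZMod_natCast_add_p_mul,
    toZMod_natCast_add_p_mul] at h'
  simpa [ZMod.val_natCast_of_lt (ha 0), ZMod.val_natCast_of_lt (hb 0)] using congrArg ZMod.val h'

theorem tail_tsum_eq_of_tsum_eq (ha : ∀ i, a i < p) (hb : ∀ i, b i < p)
    (h : ∑' i, (a i : ℤ_[p]) * (p : ℤ_[p]) ^ i = ∑' i, (b i : ℤ_[p]) * (p : ℤ_[p]) ^ i) :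
    ∑' i, (a (i + 1) : ℤ_[p]) * (p : ℤ_[p]) ^ i = ∑' i, (b (i + 1) : ℤ_[p]) * (p : ℤ_[p]) ^ i := by
  have hp : (p : ℤ_[p]) ≠ 0 := Nat.cast_ne_zero.mpr (Fact.out : p.Prime).ne_zero
  have h0 := head_eq_of_tsum_eq ha hb h
  rw [tsum_mul_p_pow_eq_add_p_mul (fun i => (a i : ℤ_[p])),
    tsum_mul_p_pow_eq_add_p_mul (fun i => (b i : ℤ_[p])), h0] at h
  exact mul_left_cancel₀ hp (add_left_cancel h)

theorem digits_eq_of_tsum_eq (ha : ∀ i, a i < p) (hb : ∀ i, b i < p)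
    (h : ∑' i, (a i : ℤ_[p]) * (p : ℤ_[p]) ^ i = ∑' i, (b i : ℤ_[p]) * (p : ℤ_[p]) ^ i) :
    a = b := by
  funext n
  induction n generalizing a b with
  | zero => exact head_eq_of_tsum_eq ha hb h
  | succ n ih =>
    exact ih (fun i => ha (i + 1)) (fun i => hb (i + 1)) (tail_tsum_eq_of_tsum_eq ha hb h)

end Digits

end PadicInt

open PadicInt in
/-- The digit expansion of `x ∈ ℤ_p` is purely periodic with period dividing `m ≥ 1`
iff `(1 - p^m)·x = j` in `ℤ_p` for some integer `j` with `0 ≤ j < p^m`. -/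
theorem purely_periodic_iff (p : ℕ) [Fact p.Prime] (m : ℕ) (hm : 1 ≤ m)
    (x : PadicInt p) (a : ℕ → ℕ)
    -- `a` is the digit expansion of `x`
    (ha : ∀ i, a i < p)
    (hx : x = ∑' i : ℕ, (a i : PadicInt p) * (p : PadicInt p) ^ i) :
    (∀ i : ℕ, a (i + m) = a i) ↔
      ∃ j : ℕ, j < p ^ m ∧ (1 - (p : PadicInt p) ^ m) * x = (j : PadicInt p) := by
  subst hx
  constructor
  · intro hper
    refine ⟨∑ i ∈ range m, a i * p ^ i, Nat.sum_range_mul_pow_lt ha m, ?_⟩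
    rw [one_sub_p_pow_mul_tsum_of_periodic (c := fun i => (a i : ℤ_[p])) fun i => by rw [hper]]
    push_cast
    rfl
  · rintro ⟨j, hj, hjx⟩
    obtain ⟨d, hd, hd_periodic, hd_sum⟩ := Nat.exists_periodic_digits (Fact.out : p.Prime).pos hj
    have hdj : (1 - (p : ℤ_[p]) ^ m) * ∑' i, (d i : ℤ_[p]) * (p : ℤ_[p]) ^ i = j := by
      rw [one_sub_p_pow_mul_tsum_of_periodic (c := fun i => (d i : ℤ_[p])) fun i => by rw [hd_periodic],
        ← hd_sum]
      push_cast
      rfl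
    obtain rfl : a = d := digits_eq_of_tsum_eq ha hd <|
      mul_left_cancel₀ (one_sub_p_pow_ne_zero (by omega)) (hjx.trans hdj.symm)
    exact hd_periodic
end

section
/- Let p be a prime, l ≥ 0 and m ≥ 1 integers, and x ∈ ℤ_p. The digit expansion (a_i)_{i≥0} of x satisfies a_{i+m} = a_i for all i ≥ l (i.e. is eventually periodic with preperiod at most l and period dividing m) if and only if there exist integers i, j with 0 ≤ i < p^l and 0 ≤ j < p^m such that (1 − p^m)·(x − i) = j·p^l in ℤ_p. Moreover, for such i, j the rational number i + j·p^l/(1 − p^m) lies in the interval [−p^l, p^l − 1]. -/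
open Finset

section Aux

variable (p : ℕ) [Fact p.Prime]

private lemma evp_hp1 : 1 < p := (Fact.out : p.Prime).one_lt

private lemma evp_summable (a : ℕ → ℕ) :
    Summable (fun i => (a i : PadicInt p) * (p : PadicInt p) ^ i) := by
  apply NonarchimedeanAddGroup.summable_of_tendsto_cofinite_zero
  rw [Nat.cofinite_eq_atTop]
  apply squeeze_zero_norm (a := fun i => ((p : ℝ) ^ i)⁻¹)
  · intro n
    calc ‖(a n : PadicInt p) * (p : PadicInt p) ^ n‖
        ≤ ‖(a n : PadicInt p)‖ * ‖(p : PadicInt p) ^ n‖ := norm_mul_le _ _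
      _ ≤ 1 * ((p : ℝ) ^ n)⁻¹ := by
          gcongr
          · exact PadicInt.norm_le_one _
          · rw [PadicInt.norm_p_pow, zpow_neg, zpow_natCast]
      _ = ((p : ℝ) ^ n)⁻¹ := one_mul _
  · exact tendsto_inv_atTop_zero.comp
      (tendsto_pow_atTop_atTop_of_one_lt (by exact_mod_cast evp_hp1 p))

private lemma evp_shift (a : ℕ → ℕ) (n : ℕ) :
    (∑' i, (a i : PadicInt p) * (p : PadicInt p) ^ i)
      = (∑ i ∈ Finset.range n, (a i : PadicInt p) * (p : PadicInt p) ^ i)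
        + (p : PadicInt p) ^ n * ∑' k, (a (k + n) : PadicInt p) * (p : PadicInt p) ^ k := by
  rw [← Summable.sum_add_tsum_nat_add n (evp_summable p a)]
  congr 1
  rw [← (evp_summable p fun k => a (k + n)).tsum_mul_left ((p : PadicInt p) ^ n)]
  exact tsum_congr fun k => by rw [pow_add]; ring

private lemma evp_mod_pow_succ (i n : ℕ) :
    i % p ^ (n + 1) = i % p ^ n + i / p ^ n % p * p ^ n := by
  have hp0 : 0 < p := by have := evp_hp1 p; omega
  have hpn : 0 < p ^ n := pow_pos hp0 n
  have hq : i / p ^ n % p < p := Nat.mod_lt _ hp0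
  have hr : i % p ^ n < p ^ n := Nat.mod_lt _ hpn
  have hbig : p ^ n * (i / p ^ n % p) + i % p ^ n < p ^ n * p := by
    have h1 : p ^ n * (i / p ^ n % p) + i % p ^ n < p ^ n * (i / p ^ n % p + 1) := by
      rw [Nat.mul_add, Nat.mul_one]; omega
    exact h1.trans_le (Nat.mul_le_mul_left _ (by omega))
  have e : p ^ (n + 1) = p ^ n * p := pow_succ p n
  conv_lhs => rw [← Nat.div_add_mod i (p ^ n)]
  rw [e, Nat.add_mod, Nat.mul_mod_mul_left,
    Nat.mod_eq_of_lt (hr.trans_le (Nat.le_mul_of_pos_right _ hp0)),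
    Nat.mod_eq_of_lt hbig]
  ring

private lemma evp_sum_digits (i n : ℕ) :
    (∑ k ∈ Finset.range n, i / p ^ k % p * p ^ k) = i % p ^ n := by
  induction n with
  | zero => simp [Nat.mod_one]
  | succ n ih => rw [Finset.sum_range_succ, ih, evp_mod_pow_succ]

private lemma evp_sum_lt (a : ℕ → ℕ) (ha : ∀ i, a i < p) (n : ℕ) :
    (∑ k ∈ Finset.range n, a k * p ^ k) < p ^ n := by
  have hp : 1 ≤ p := (evp_hp1 p).le
  induction n with
  | zero => simp
  | succ n ih =>
    rw [Finset.sum_range_succ]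
    have h1 : a n * p ^ n ≤ (p - 1) * p ^ n :=
      Nat.mul_le_mul_right _ (by have := ha n; omega)
    have h2 : p ^ n + (p - 1) * p ^ n = p ^ (n + 1) := by
      have h3 : 1 + (p - 1) = p := by omega
      calc p ^ n + (p - 1) * p ^ n = (1 + (p - 1)) * p ^ n := by ring
        _ = p * p ^ n := by rw [h3]
        _ = p ^ (n + 1) := by rw [pow_succ, mul_comm]
    omega

private lemma evp_uniq (a b : ℕ → ℕ) (ha : ∀ i, a i < p) (hb : ∀ i, b i < p)
    (h : (∑' i, (a i : PadicInt p) * (p : PadicInt p) ^ i)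
        = ∑' i, (b i : PadicInt p) * (p : PadicInt p) ^ i) :
    a = b := by
  funext n
  induction n using Nat.strong_induction_on with
  | _ n ih =>
  have hsum : (∑ i ∈ Finset.range n, (a i : PadicInt p) * (p : PadicInt p) ^ i)
      = ∑ i ∈ Finset.range n, (b i : PadicInt p) * (p : PadicInt p) ^ i :=
    Finset.sum_congr rfl fun i hi => by rw [ih i (Finset.mem_range.mp hi)]
  have h2 := h
  rw [evp_shift p a n, evp_shift p b n, hsum, add_right_inj] at h2
  have hpn : ((p : PadicInt p)) ^ n ≠ 0 := by
    apply pow_ne_zero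
    exact_mod_cast Nat.Prime.ne_zero Fact.out
  have hT : (∑' k, (a (k + n) : PadicInt p) * (p : PadicInt p) ^ k)
      = ∑' k, (b (k + n) : PadicInt p) * (p : PadicInt p) ^ k :=
    mul_left_cancel₀ hpn h2
  rw [evp_shift p (fun k => a (k + n)) 1, evp_shift p (fun k => b (k + n)) 1] at hT
  simp only [Finset.sum_range_one, pow_zero, mul_one, pow_one, zero_add] at hT
  have key : ((a n : ℤ) - (b n : ℤ) : ℤ) = ((a n : ℤ) - (b n : ℤ)) := rfl
  set w : PadicInt p := (∑' k, (b (k + 1 + n) : PadicInt p) * (p : PadicInt p) ^ k)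
      - ∑' k, (a (k + 1 + n) : PadicInt p) * (p : PadicInt p) ^ k with hw
  have keyc : (((a n : ℤ) - (b n : ℤ) : ℤ) : PadicInt p) = (p : PadicInt p) * w := by
    rw [hw]
    push_cast
    linear_combination hT
  have hdvd : (p : ℤ) ∣ (a n : ℤ) - (b n : ℤ) := by
    rw [← PadicInt.norm_int_lt_one_iff_dvd, keyc]
    refine lt_of_le_of_lt (norm_mul_le _ _) ?_
    rw [PadicInt.norm_p]
    calc ((p : ℝ))⁻¹ * ‖w‖ ≤ ((p : ℝ))⁻¹ * 1 := by
          gcongr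
          exact PadicInt.norm_le_one _
      _ = ((p : ℝ))⁻¹ := mul_one _
      _ < 1 := by
          rw [inv_lt_one_iff₀]
          right; exact_mod_cast evp_hp1 p
  have habs : |(a n : ℤ) - (b n : ℤ)| < p := by
    have h1 := ha n; have h2 := hb n
    rw [abs_lt]
    constructor <;> omega
  have := Int.eq_zero_of_abs_lt_dvd hdvd habs
  omega

private lemma evp_periodic_tail (c : ℕ → ℕ) (m : ℕ) (hc : ∀ k, c (k + m) = c k) :
    (1 - (p : PadicInt p) ^ m) * (∑' k, (c k : PadicInt p) * (p : PadicInt p) ^ k)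
      = ∑ r ∈ Finset.range m, (c r : PadicInt p) * (p : PadicInt p) ^ r := by
  have h := evp_shift p c m
  simp only [hc] at h
  linear_combination h

private lemma evp_one_sub_ne (m : ℕ) (hm : 1 ≤ m) : (1 - (p : PadicInt p) ^ m) ≠ 0 := by
  intro h0
  have h1 : (p : PadicInt p) ^ m = 1 := by linear_combination -h0
  have h2 : ‖(p : PadicInt p) ^ m‖ = 1 := by rw [h1, norm_one]
  have h3 : ‖(p : PadicInt p) ^ m‖ = ((p : ℝ))⁻¹ ^ m := by
    rw [PadicInt.norm_p_pow, zpow_neg, zpow_natCast, inv_pow]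
  have hlt : ((p : ℝ))⁻¹ ^ m < 1 := by
    apply pow_lt_one₀ (by positivity)
    · rw [inv_lt_one_iff₀]; right; exact_mod_cast evp_hp1 p
    · omega
  rw [← h3, h2] at hlt
  exact lt_irrefl 1 hlt

end Aux

/-- The digit expansion of `x ∈ ℤ_p` is eventually periodic with preperiod at most `l`
and period dividing `m ≥ 1` iff `(1 - p^m)·(x - i) = j·p^l` in `ℤ_p` for some integers
`0 ≤ i < p^l` and `0 ≤ j < p^m`; moreover, for such `i, j` the rational number
`i + j·p^l/(1 - p^m)` lies in `[-p^l, p^l - 1]`. -/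
theorem eventually_periodic_iff (p : ℕ) [Fact p.Prime] (l m : ℕ) (hm : 1 ≤ m)
    (x : PadicInt p) (a : ℕ → ℕ)
    -- `a` is the digit expansion of `x`
    (ha : ∀ i, a i < p)
    (hx : x = ∑' i : ℕ, (a i : PadicInt p) * (p : PadicInt p) ^ i) :
    ((∀ i : ℕ, l ≤ i → a (i + m) = a i) ↔
      ∃ i j : ℕ, i < p ^ l ∧ j < p ^ m ∧
        (1 - (p : PadicInt p) ^ m) * (x - (i : PadicInt p))
          = (j : PadicInt p) * (p : PadicInt p) ^ l) ∧
    (∀ i j : ℕ, i < p ^ l → j < p ^ m →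
      (1 - (p : PadicInt p) ^ m) * (x - (i : PadicInt p))
          = (j : PadicInt p) * (p : PadicInt p) ^ l →
      -(p : ℚ) ^ l ≤ (i : ℚ) + (j : ℚ) * (p : ℚ) ^ l / (1 - (p : ℚ) ^ m) ∧
      (i : ℚ) + (j : ℚ) * (p : ℚ) ^ l / (1 - (p : ℚ) ^ m) ≤ (p : ℚ) ^ l - 1) := by
  have hp1 : 1 < p := evp_hp1 p
  have hp0 : 0 < p := by omega
  constructor
  · constructor
    · -- forward
      intro hper
      refine ⟨∑ k ∈ Finset.range l, a k * p ^ k, ∑ r ∈ Finset.range m, a (r + l) * p ^ r,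
        evp_sum_lt p a ha l, evp_sum_lt p (fun r => a (r + l)) (fun r => ha _) m, ?_⟩
      have hshift := evp_shift p a l
      have htail := evp_periodic_tail p (fun k => a (k + l)) m
        (fun k => by
          show a (k + m + l) = a (k + l)
          have h1 : l ≤ k + l := Nat.le_add_left l k
          have := hper (k + l) h1
          rwa [show k + l + m = k + m + l by omega] at this)
      rw [hx, hshift]
      push_cast
      linear_combination ((p : PadicInt p) ^ l) * htail
    · -- backward
      rintro ⟨i, j, hi, hj, heq⟩
      set b : ℕ → ℕ := fun k => if k < l then i / p ^ k % p else j / p ^ ((k - l) % m) % p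
        with hbdef
      have hb : ∀ k, b k < p := by
        intro k
        simp only [hbdef]
        split <;> exact Nat.mod_lt _ hp0
      have hbper : ∀ k, l ≤ k → b (k + m) = b k := by
        intro k hk
        simp only [hbdef, if_neg (by omega : ¬ k + m < l), if_neg (by omega : ¬ k < l)]
        congr 2
        have h4 : k + m - l = (k - l) + m := by omega
        rw [h4, Nat.add_mod_right]
      have hXsplit := evp_shift p b l
      have hhead : (∑ k ∈ Finset.range l, (b k : PadicInt p) * (p : PadicInt p) ^ k)
          = (i : PadicInt p) := by
        have h5 : (∑ k ∈ Finset.range l, b k * p ^ k) = i := by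
          rw [show (∑ k ∈ Finset.range l, b k * p ^ k)
              = ∑ k ∈ Finset.range l, i / p ^ k % p * p ^ k from
            Finset.sum_congr rfl fun k hk => by
              simp [hbdef, if_pos (Finset.mem_range.mp hk)]]
          rw [evp_sum_digits, Nat.mod_eq_of_lt hi]
        calc (∑ k ∈ Finset.range l, (b k : PadicInt p) * (p : PadicInt p) ^ k)
            = ((∑ k ∈ Finset.range l, b k * p ^ k : ℕ) : PadicInt p) := by push_cast; ring
          _ = (i : PadicInt p) := by rw [h5]
      have hbtail : ∀ k, b (k + l) = j / p ^ (k % m) % p := by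
        intro k
        simp only [hbdef, if_neg (by omega : ¬ k + l < l), Nat.add_sub_cancel]
      have htail := evp_periodic_tail p (fun k => b (k + l)) m
        (fun k => by
          show b (k + m + l) = b (k + l)
          rw [show k + m + l = (k + m) + l from rfl, hbtail, hbtail, Nat.add_mod_right])
      have hjtail : (∑ r ∈ Finset.range m, (b (r + l) : PadicInt p) * (p : PadicInt p) ^ r)
          = (j : PadicInt p) := by
        have h6 : (∑ r ∈ Finset.range m, b (r + l) * p ^ r) = j := by
          rw [show (∑ r ∈ Finset.range m, b (r + l) * p ^ r)
              = ∑ r ∈ Finset.range m, j / p ^ r % p * p ^ r from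
            Finset.sum_congr rfl fun r hr => by
              rw [hbtail, Nat.mod_eq_of_lt (Finset.mem_range.mp hr)]]
          rw [evp_sum_digits, Nat.mod_eq_of_lt hj]
        calc (∑ r ∈ Finset.range m, (b (r + l) : PadicInt p) * (p : PadicInt p) ^ r)
            = ((∑ r ∈ Finset.range m, b (r + l) * p ^ r : ℕ) : PadicInt p) := by push_cast; ring
          _ = (j : PadicInt p) := by rw [h6]
      rw [hjtail] at htail
      have hXeq : (1 - (p : PadicInt p) ^ m)
          * ((∑' k, (b k : PadicInt p) * (p : PadicInt p) ^ k) - (i : PadicInt p))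
          = (j : PadicInt p) * (p : PadicInt p) ^ l := by
        rw [hXsplit, hhead]
        linear_combination ((p : PadicInt p) ^ l) * htail
      have hXx : (∑' k, (b k : PadicInt p) * (p : PadicInt p) ^ k) = x := by
        have h7 := hXeq.trans heq.symm
        have h8 := mul_left_cancel₀ (evp_one_sub_ne p m hm) h7
        exact sub_left_inj.mp h8
      have hab : a = b := evp_uniq p a b ha hb (by rw [← hx, hXx])
      intro k hk
      rw [hab]
      exact hbper k hk
  · -- rational bounds
    intro i j hi hj _
    have hpQ : (1 : ℚ) < p := by exact_mod_cast hp1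
    have hA : (0 : ℚ) < (p : ℚ) ^ m - 1 := by
      have h9 : (1 : ℚ) < (p : ℚ) ^ m := one_lt_pow₀ hpQ (by omega)
      linarith
    have hiQ : (i : ℚ) ≤ (p : ℚ) ^ l - 1 := by
      have h10 : (i : ℚ) + 1 ≤ ((p : ℚ)) ^ l := by exact_mod_cast Nat.succ_le_of_lt hi
      linarith
    have hjQ : (j : ℚ) ≤ (p : ℚ) ^ m - 1 := by
      have h11 : (j : ℚ) + 1 ≤ ((p : ℚ)) ^ m := by exact_mod_cast Nat.succ_le_of_lt hj
      linarith
    have hplQ : (0 : ℚ) < (p : ℚ) ^ l := by positivity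
    have hkey : (j : ℚ) * (p : ℚ) ^ l / (1 - (p : ℚ) ^ m)
        = -((j : ℚ) * (p : ℚ) ^ l / ((p : ℚ) ^ m - 1)) := by
      rw [show (1 : ℚ) - (p : ℚ) ^ m = -((p : ℚ) ^ m - 1) by ring, div_neg]
    constructor
    · rw [hkey]
      have h1 : (j : ℚ) * (p : ℚ) ^ l / ((p : ℚ) ^ m - 1) ≤ (p : ℚ) ^ l := by
        rw [div_le_iff₀ hA]
        nlinarith [Nat.cast_nonneg (α := ℚ) i, Nat.cast_nonneg (α := ℚ) j]
      have h2 : (0 : ℚ) ≤ (i : ℚ) := Nat.cast_nonneg i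
      linarith
    · rw [hkey]
      have h1 : (0 : ℚ) ≤ (j : ℚ) * (p : ℚ) ^ l / ((p : ℚ) ^ m - 1) := by positivity
      linarith
end

section
/- Let d ≥ 2 and let l ≥ 0, m ≥ 1 be integers, and set z := (d^{l+1} + d − 1)/(d − 1) ∈ ℚ. Then for every s ≥ 0 the set A^{l,m}_s is contained in the interval [−z, z]. In particular, if x ∈ ℚ satisfies −z ≤ x ≤ z, r is an integer with 0 ≤ r ≤ d − 1, and b ∈ ℚ satisfies −d^l ≤ b ≤ d^l − 1, then −z ≤ (x − r)/d + b ≤ z. -/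
/-- `P^{l,m} = { i + j·d^l/(1 - d^m) : 0 ≤ i < d^l, 0 ≤ j < d^m } ⊆ ℚ`. -/
def Pset (d l m : ℕ) : Set ℚ :=
  {q | ∃ i j : ℤ, 0 ≤ i ∧ i < (d : ℤ) ^ l ∧ 0 ≤ j ∧ j < (d : ℤ) ^ m ∧
    q = (i : ℚ) + (j : ℚ) * (d : ℚ) ^ l / (1 - (d : ℚ) ^ m)}

/-- `A^{l,m}_0 = P^{l,m}` and `A^{l,m}_{s+1} = σ(A^{l,m}_s) + P^{l,m}`, where
`σ(q) = (q - r)/d` for the unique integer `0 ≤ r < d` with `(q - r)/d ∈ Z_{d,0}`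
(i.e. with denominator coprime to `d`). -/
def Aset (d l m : ℕ) : ℕ → Set ℚ
  | 0 => Pset d l m
  | s + 1 =>
    {q | ∃ a ∈ Aset d l m s, ∃ b ∈ Pset d l m, ∃ r : ℤ, 0 ≤ r ∧ r < (d : ℤ) ∧
      (((a - (r : ℚ)) / (d : ℚ)).den).Coprime d ∧ q = (a - (r : ℚ)) / (d : ℚ) + b}

lemma Pset_bound (d l m : ℕ) (hd : 2 ≤ d) (hm : 1 ≤ m) :
    ∀ q ∈ Pset d l m, -(d : ℚ) ^ l ≤ q ∧ q ≤ (d : ℚ) ^ l - 1 := by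
  have hd2 : (2 : ℚ) ≤ (d : ℚ) := by exact_mod_cast hd
  have hdm : (2 : ℚ) ≤ (d : ℚ) ^ m := by
    calc (2 : ℚ) ≤ (d : ℚ) ^ 1 := by simpa using hd2
    _ ≤ (d : ℚ) ^ m := pow_le_pow_right₀ (by linarith) hm
  have hdm1 : (0 : ℚ) < (d : ℚ) ^ m - 1 := by linarith
  have hdl : (0 : ℚ) < (d : ℚ) ^ l := by positivity
  rintro q ⟨i, j, hi0, hi1, hj0, hj1, rfl⟩
  have hi0' : (0 : ℚ) ≤ (i : ℚ) := by exact_mod_cast hi0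
  have hi1' : (i : ℚ) ≤ (d : ℚ) ^ l - 1 := by
    have : (i : ℤ) ≤ (d : ℤ) ^ l - 1 := by omega
    have := (Int.cast_le (R := ℚ)).2 this
    push_cast at this
    linarith
  have hj0' : (0 : ℚ) ≤ (j : ℚ) := by exact_mod_cast hj0
  have hj1' : (j : ℚ) ≤ (d : ℚ) ^ m - 1 := by
    have : (j : ℤ) ≤ (d : ℤ) ^ m - 1 := by omega
    have := (Int.cast_le (R := ℚ)).2 this
    push_cast at this
    linarith
  have hrw : (j : ℚ) * (d : ℚ) ^ l / (1 - (d : ℚ) ^ m)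
      = -((j : ℚ) * (d : ℚ) ^ l / ((d : ℚ) ^ m - 1)) := by
    rw [show (1 - (d : ℚ) ^ m) = -((d : ℚ) ^ m - 1) by ring, div_neg]
  have ht1 : (j : ℚ) * (d : ℚ) ^ l / (1 - (d : ℚ) ^ m) ≤ 0 := by
    rw [hrw]
    have : 0 ≤ (j : ℚ) * (d : ℚ) ^ l / ((d : ℚ) ^ m - 1) := by positivity
    linarith
  have ht2 : -(d : ℚ) ^ l ≤ (j : ℚ) * (d : ℚ) ^ l / (1 - (d : ℚ) ^ m) := by
    rw [hrw, neg_le_neg_iff, div_le_iff₀ hdm1]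
    nlinarith
  constructor <;> linarith

/-- With `z = (d^{l+1} + d - 1)/(d - 1)`, every `A^{l,m}_s` is contained in `[-z, z]`;
in particular the inductive step: if `-z ≤ x ≤ z`, `0 ≤ r ≤ d - 1` and
`-d^l ≤ b ≤ d^l - 1` then `-z ≤ (x - r)/d + b ≤ z`. -/
theorem Aset_subset_Icc (d : ℕ) (hd : 2 ≤ d) (l m : ℕ) (hm : 1 ≤ m)
    (z : ℚ) (hz : z = ((d : ℚ) ^ (l + 1) + (d : ℚ) - 1) / ((d : ℚ) - 1)) :
    (∀ s : ℕ, Aset d l m s ⊆ Set.Icc (-z) z) ∧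
    (∀ x : ℚ, -z ≤ x → x ≤ z → ∀ r : ℤ, 0 ≤ r → r ≤ (d : ℤ) - 1 →
      ∀ b : ℚ, -(d : ℚ) ^ l ≤ b → b ≤ (d : ℚ) ^ l - 1 →
      -z ≤ (x - (r : ℚ)) / (d : ℚ) + b ∧ (x - (r : ℚ)) / (d : ℚ) + b ≤ z) := by
  have hd2 : (2 : ℚ) ≤ (d : ℚ) := by exact_mod_cast hd
  have hdpos : (0 : ℚ) < (d : ℚ) := by linarith
  have hd1 : (0 : ℚ) < (d : ℚ) - 1 := by linarith
  have hdl : (0 : ℚ) < (d : ℚ) ^ l := by positivity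
  have hdl1 : (1 : ℚ) ≤ (d : ℚ) ^ l := one_le_pow₀ (by linarith)
  have hzd : z * ((d : ℚ) - 1) = (d : ℚ) ^ (l + 1) + (d : ℚ) - 1 := by
    rw [hz]; field_simp
  have hpow : (d : ℚ) ^ (l + 1) = (d : ℚ) ^ l * (d : ℚ) := pow_succ _ _
  have hzl : (d : ℚ) ^ l ≤ z := by nlinarith
  have step : ∀ x : ℚ, -z ≤ x → x ≤ z → ∀ r : ℤ, 0 ≤ r → r ≤ (d : ℤ) - 1 →
      ∀ b : ℚ, -(d : ℚ) ^ l ≤ b → b ≤ (d : ℚ) ^ l - 1 →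
      -z ≤ (x - (r : ℚ)) / (d : ℚ) + b ∧ (x - (r : ℚ)) / (d : ℚ) + b ≤ z := by
    intro x hx1 hx2 r hr1 hr2 b hb1 hb2
    have hr1' : (0 : ℚ) ≤ (r : ℚ) := by exact_mod_cast hr1
    have hr2' : (r : ℚ) ≤ (d : ℚ) - 1 := by
      have := (Int.cast_le (R := ℚ)).2 hr2
      push_cast at this; linarith
    have hrw : (x - (r : ℚ)) / (d : ℚ) + b = (x - (r : ℚ) + (d : ℚ) * b) / (d : ℚ) := by
      field_simp
    constructor
    · rw [hrw, le_div_iff₀ hdpos]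
      nlinarith [mul_le_mul_of_nonneg_left hb1 hdpos.le]
    · rw [hrw, div_le_iff₀ hdpos]
      nlinarith [mul_le_mul_of_nonneg_left hb2 hdpos.le]
  refine ⟨?_, step⟩
  intro s
  induction s with
  | zero =>
    intro q hq
    obtain ⟨h1, h2⟩ := Pset_bound d l m hd hm q hq
    exact ⟨by linarith, by linarith⟩
  | succ s ih =>
    rintro q ⟨a, ha, b, hb, r, hr1, hr2, _, rfl⟩
    obtain ⟨ha1, ha2⟩ := ih ha
    obtain ⟨hb1, hb2⟩ := Pset_bound d l m hd hm b hb
    exact step a ha1 ha2 r hr1 (by omega) b hb1 hb2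
end

section
/- Let d ≥ 2 and let l ≥ 0, m ≥ 1 be integers. Then the set A^{l,m} := ⋃_{s≥0} A^{l,m}_s is finite; in fact it is contained in the finite set { q ∈ ℚ : (d^m − 1)·q ∈ ℤ and −(d^{l+1} + d − 1)/(d − 1) ≤ q ≤ (d^{l+1} + d − 1)/(d − 1) }. -/
private lemma myRatDenDvd (a b : ℤ) : (((a : ℚ) / (b : ℚ)).den : ℤ) ∣ b := by
  have h := Rat.den_dvd a b
  rwa [Rat.divInt_eq_div] at h

private lemma myDenMul (c : ℚ) : (c.den : ℚ) * c = c.num := by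
  rw [mul_comm]; exact_mod_cast Rat.mul_den_eq_num c

/-- Properties of elements of `Pset`. -/
private lemma Pset_props {d l m : ℕ} (hd : 2 ≤ d) (hm : 1 ≤ m) {b : ℚ}
    (hb : b ∈ Pset d l m) :
    (∃ n : ℤ, ((d : ℚ) ^ m - 1) * b = (n : ℚ)) ∧
    -((d : ℚ) ^ l) ≤ b ∧ b ≤ (d : ℚ) ^ l := by
  obtain ⟨i, j, hi0, hil, hj0, hjm, rfl⟩ := hb
  have hD : (2 : ℚ) ≤ (d : ℚ) := by exact_mod_cast hd
  have hDm : (d : ℚ) ≤ (d : ℚ) ^ m := le_self_pow₀ (by linarith) (by omega)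
  have hdm1 : (1 : ℚ) < (d : ℚ) ^ m := by linarith
  have hne : (1 : ℚ) - (d : ℚ) ^ m ≠ 0 := by linarith
  have hDl : (0 : ℚ) < (d : ℚ) ^ l := by positivity
  have hx0 : (0 : ℚ) ≤ (i : ℚ) := by exact_mod_cast hi0
  have hx1 : (i : ℚ) ≤ (d : ℚ) ^ l - 1 := by
    have h : i ≤ (d : ℤ) ^ l - 1 := by omega
    exact_mod_cast h
  have hy0 : (0 : ℚ) ≤ (j : ℚ) := by exact_mod_cast hj0
  have hy1 : (j : ℚ) ≤ (d : ℚ) ^ m - 1 := by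
    have h : j ≤ (d : ℤ) ^ m - 1 := by omega
    exact_mod_cast h
  refine ⟨⟨((d : ℤ) ^ m - 1) * i - j * (d : ℤ) ^ l, ?_⟩, ?_, ?_⟩
  · push_cast
    field_simp
    ring
  · have h3 : -((d : ℚ) ^ l) ≤ (j : ℚ) * (d : ℚ) ^ l / (1 - (d : ℚ) ^ m) := by
      rw [le_div_iff_of_neg (by linarith)]
      nlinarith
    linarith
  · have h2 : (j : ℚ) * (d : ℚ) ^ l / (1 - (d : ℚ) ^ m) ≤ 0 :=
      div_nonpos_iff.mpr (Or.inl ⟨by positivity, by linarith⟩)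
    linarith

/-- The key invariant, by induction on `s`. -/
private lemma Aset_invariant {d l m : ℕ} (hd : 2 ≤ d) (hm : 1 ≤ m) :
    ∀ s : ℕ, ∀ q ∈ Aset d l m s,
      (∃ n : ℤ, ((d : ℚ) ^ m - 1) * q = (n : ℚ)) ∧
      -(((d : ℚ) ^ (l + 1) + (d : ℚ) - 1) / ((d : ℚ) - 1)) ≤ q ∧
      q ≤ ((d : ℚ) ^ (l + 1) + (d : ℚ) - 1) / ((d : ℚ) - 1) := by
  have hD : (2 : ℚ) ≤ (d : ℚ) := by exact_mod_cast hd
  have hD0 : (0 : ℚ) < (d : ℚ) := by linarith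
  have hD1 : (0 : ℚ) < (d : ℚ) - 1 := by linarith
  have hDm : (d : ℚ) ≤ (d : ℚ) ^ m := le_self_pow₀ (by linarith) (by omega)
  have hDm1 : (0 : ℚ) < (d : ℚ) ^ m - 1 := by linarith
  have hDl : (0 : ℚ) < (d : ℚ) ^ l := by positivity
  have hDl1 : (1 : ℚ) ≤ (d : ℚ) ^ l := one_le_pow₀ (by linarith)
  set B : ℚ := ((d : ℚ) ^ (l + 1) + (d : ℚ) - 1) / ((d : ℚ) - 1) with hBdef
  have hB : B * ((d : ℚ) - 1) = (d : ℚ) ^ (l + 1) + (d : ℚ) - 1 :=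
    div_mul_cancel₀ _ hD1.ne'
  have hlB : (d : ℚ) ^ l ≤ B := by
    rw [hBdef, le_div_iff₀ hD1, pow_succ]
    nlinarith
  intro s
  induction s with
  | zero =>
    intro q hq
    obtain ⟨hint, h1, h2⟩ := Pset_props hd hm hq
    exact ⟨hint, by linarith, by linarith⟩
  | succ s ih =>
    rintro q ⟨a, ha, b, hb, r, hr0, hrd, hcop, rfl⟩
    obtain ⟨⟨n, hn⟩, ha1, ha2⟩ := ih a ha
    obtain ⟨⟨nb, hnb⟩, hb1, hb2⟩ := Pset_props hd hm hb
    set c : ℚ := (a - (r : ℚ)) / (d : ℚ) with hc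
    have hr0' : (0 : ℚ) ≤ (r : ℚ) := by exact_mod_cast hr0
    have hr1' : (r : ℚ) ≤ (d : ℚ) - 1 := by
      have h : r ≤ (d : ℤ) - 1 := by omega
      exact_mod_cast h
    have hcd : c * (d : ℚ) = a - (r : ℚ) := div_mul_cancel₀ _ hD0.ne'
    -- integrality
    have key : c * ((d : ℚ) * ((d : ℚ) ^ m - 1)) = (n : ℚ) - ((d : ℚ) ^ m - 1) * (r : ℚ) := by
      calc c * ((d : ℚ) * ((d : ℚ) ^ m - 1)) = (c * (d : ℚ)) * ((d : ℚ) ^ m - 1) := by ring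
      _ = (a - (r : ℚ)) * ((d : ℚ) ^ m - 1) := by rw [hcd]
      _ = (n : ℚ) - ((d : ℚ) ^ m - 1) * (r : ℚ) := by linear_combination hn
    have hcval : c = ((n - ((d : ℤ) ^ m - 1) * r : ℤ) : ℚ) / (((d : ℤ) * ((d : ℤ) ^ m - 1) : ℤ) : ℚ) := by
      rw [eq_div_iff (by push_cast; exact (mul_pos hD0 hDm1).ne')]
      push_cast
      linear_combination key
    have hdvd : ((c.den : ℤ)) ∣ (d : ℤ) * ((d : ℤ) ^ m - 1) := by
      have h := myRatDenDvd (n - ((d : ℤ) ^ m - 1) * r) ((d : ℤ) * ((d : ℤ) ^ m - 1))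
      rwa [← hcval] at h
    have hco : IsCoprime ((c.den : ℤ)) ((d : ℤ)) := Nat.isCoprime_iff_coprime.mpr hcop
    have hdvd2 : ((c.den : ℤ)) ∣ (d : ℤ) ^ m - 1 := hco.dvd_of_dvd_mul_left hdvd
    obtain ⟨u, hu⟩ := hdvd2
    have hz : ((d : ℚ) ^ m - 1) * c = ((u * c.num : ℤ) : ℚ) := by
      have h1 : ((d : ℚ) ^ m - 1) = (c.den : ℚ) * (u : ℚ) := by
        have := congrArg (fun z : ℤ => (z : ℚ)) hu
        push_cast at this; linarith
      rw [h1]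
      push_cast
      calc (c.den : ℚ) * (u : ℚ) * c = (u : ℚ) * ((c.den : ℚ) * c) := by ring
      _ = (u : ℚ) * (c.num : ℚ) := by rw [myDenMul]
    refine ⟨⟨u * c.num + nb, ?_⟩, ?_, ?_⟩
    · push_cast
      push_cast at hz
      linear_combination hz + hnb
    · -- lower bound
      have hps : (d : ℚ) ^ (l + 1) = (d : ℚ) ^ l * (d : ℚ) := pow_succ _ _
      have hbd : -((d : ℚ) ^ (l + 1)) ≤ b * (d : ℚ) := by
        have := mul_le_mul_of_nonneg_right hb1 hD0.le
        nlinarith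
      have hBd : B * (d : ℚ) = B + ((d : ℚ) ^ (l + 1) + (d : ℚ) - 1) := by
        linear_combination hB
      have h : (-B) * (d : ℚ) ≤ (c + b) * (d : ℚ) := by
        rw [add_mul, hcd]
        linarith
      linarith [le_of_mul_le_mul_right h hD0]
    · -- upper bound
      have hps : (d : ℚ) ^ (l + 1) = (d : ℚ) ^ l * (d : ℚ) := pow_succ _ _
      have hbd : b * (d : ℚ) ≤ (d : ℚ) ^ (l + 1) := by
        have := mul_le_mul_of_nonneg_right hb2 hD0.le
        nlinarith
      have hBd : B * (d : ℚ) = B + ((d : ℚ) ^ (l + 1) + (d : ℚ) - 1) := by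
        linear_combination hB
      have h : (c + b) * (d : ℚ) ≤ B * (d : ℚ) := by
        rw [add_mul, hcd]
        linarith
      exact le_of_mul_le_mul_right h hD0

private lemma finite_band (c lo hi : ℚ) (hc : 0 < c) :
    Set.Finite {q : ℚ | (∃ n : ℤ, c * q = (n : ℚ)) ∧ lo ≤ q ∧ q ≤ hi} := by
  apply Set.Finite.subset ((Set.finite_Icc ⌈c * lo⌉ ⌊c * hi⌋).image (fun n : ℤ => (n : ℚ) / c))
  rintro q ⟨⟨n, hn⟩, h1, h2⟩
  refine ⟨n, ⟨?_, ?_⟩, ?_⟩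
  · exact Int.ceil_le.mpr (by rw [← hn]; exact mul_le_mul_of_nonneg_left h1 hc.le)
  · exact Int.le_floor.mpr (by rw [← hn]; exact mul_le_mul_of_nonneg_left h2 hc.le)
  · simp only
    rw [← hn, mul_comm, mul_div_assoc, div_self hc.ne', mul_one]

/-- The set `A^{l,m} = ⋃_s A^{l,m}_s` is finite; in fact it is contained in the finite
set of rationals `q` with `(d^m - 1)·q ∈ ℤ` and
`-(d^{l+1} + d - 1)/(d - 1) ≤ q ≤ (d^{l+1} + d - 1)/(d - 1)`. -/
theorem Aset_union_finite (d : ℕ) (hd : 2 ≤ d) (l m : ℕ) (hm : 1 ≤ m) :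
    (⋃ s : ℕ, Aset d l m s).Finite ∧
    (⋃ s : ℕ, Aset d l m s) ⊆
      {q : ℚ | (∃ n : ℤ, ((d : ℚ) ^ m - 1) * q = (n : ℚ)) ∧
        -(((d : ℚ) ^ (l + 1) + (d : ℚ) - 1) / ((d : ℚ) - 1)) ≤ q ∧
        q ≤ ((d : ℚ) ^ (l + 1) + (d : ℚ) - 1) / ((d : ℚ) - 1)} ∧
    Set.Finite {q : ℚ | (∃ n : ℤ, ((d : ℚ) ^ m - 1) * q = (n : ℚ)) ∧
        -(((d : ℚ) ^ (l + 1) + (d : ℚ) - 1) / ((d : ℚ) - 1)) ≤ q ∧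
        q ≤ ((d : ℚ) ^ (l + 1) + (d : ℚ) - 1) / ((d : ℚ) - 1)} := by
  have hD : (2 : ℚ) ≤ (d : ℚ) := by exact_mod_cast hd
  have hDm : (d : ℚ) ≤ (d : ℚ) ^ m := le_self_pow₀ (by linarith) (by omega)
  have hDm1 : (0 : ℚ) < (d : ℚ) ^ m - 1 := by linarith
  have hsub : (⋃ s : ℕ, Aset d l m s) ⊆
      {q : ℚ | (∃ n : ℤ, ((d : ℚ) ^ m - 1) * q = (n : ℚ)) ∧
        -(((d : ℚ) ^ (l + 1) + (d : ℚ) - 1) / ((d : ℚ) - 1)) ≤ q ∧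
        q ≤ ((d : ℚ) ^ (l + 1) + (d : ℚ) - 1) / ((d : ℚ) - 1)} := by
    rintro q hq
    rw [Set.mem_iUnion] at hq
    obtain ⟨s, hs⟩ := hq
    exact Aset_invariant hd hm s q hs
  have hfin := finite_band ((d : ℚ) ^ m - 1)
    (-(((d : ℚ) ^ (l + 1) + (d : ℚ) - 1) / ((d : ℚ) - 1)))
    (((d : ℚ) ^ (l + 1) + (d : ℚ) - 1) / ((d : ℚ) - 1)) hDm1
  exact ⟨hfin.subset hsub, hsub, hfin⟩
end

section
/- Let p be a prime and f : ℤ_p → ℤ_p a 1-Lipschitz function whose set S(f) of sections at all vertices (k, m), k ≥ 0, 0 ≤ m < p^k, has at most q elements. Then for every integer i with 0 ≤ i < p, the digit expansion (a_j)_{j≥0} of f(i) ∈ ℤ_p is eventually periodic with period at most q and preperiod at most q + 1: there exists an integer m with 1 ≤ m ≤ q such that a_{j+m} = a_j for all j ≥ q + 1. -/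
/-- `h` is the section of `f` at the vertex `(k, m)`: for some integer `0 ≤ r < p^k`,
`f(m + p^k·y) = r + p^k·h(y)` for all `y ∈ ℤ_p`. -/
def IsSection (p : ℕ) [Fact p.Prime] (f h : PadicInt p → PadicInt p) (k m : ℕ) : Prop :=
  ∃ r : ℕ, r < p ^ k ∧ ∀ y : PadicInt p,
    f ((m : PadicInt p) + (p : PadicInt p) ^ k * y)
      = (r : PadicInt p) + (p : PadicInt p) ^ k * h y

/-- The set `S(f)` of all sections of `f` at vertices `(k, m)`, `k ≥ 0`, `0 ≤ m < p^k`. -/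
def SectionsSet (p : ℕ) [Fact p.Prime] (f : PadicInt p → PadicInt p) :
    Set (PadicInt p → PadicInt p) :=
  {h | ∃ k m : ℕ, m < p ^ k ∧ IsSection p f h k m}

/-!
Write `f(i) = R_k + p^k g_k`, where `R_k < p^k` is the `k`-digit truncation of `f(i)` and `g_k`
is the `k`-th tail of its digit series. Because `f` is 1-Lipschitz it has a section `h_k` at
`(k, i)`, and `h_k(0) = g_k`. Among the `q + 1` vertices `k = 1, …, q + 1` two must carry the same
section, say `s < t`; then `g_s = g_t`, and uniqueness of digit expansions makes the digits
periodic with period `t - s` from position `s` on.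
-/

lemma sum_range_mul_pow_lt_pow {p : ℕ} {a : ℕ → ℕ} (ha : ∀ j, a j < p) (k : ℕ) :
    ∑ j ∈ Finset.range k, a j * p ^ j < p ^ k := by
  induction k with
  | zero => simp
  | succ k ih =>
    rw [Finset.sum_range_succ, pow_succ]
    nlinarith [Nat.mul_le_mul_right (p ^ k) (ha k)]

namespace PadicInt

variable {p : ℕ} [Fact p.Prime]

lemma norm_le_pow_iff_dvd (x : ℤ_[p]) (k : ℕ) :
    ‖x‖ ≤ (p : ℝ) ^ (-k : ℤ) ↔ (p : ℤ_[p]) ^ k ∣ x := by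
  rw [norm_le_pow_iff_mem_span_pow, Ideal.mem_span_singleton]

lemma pow_dvd_sub_of_lipschitz {f : ℤ_[p] → ℤ_[p]} (hf : ∀ x y, ‖f x - f y‖ ≤ ‖x - y‖)
    {x y : ℤ_[p]} {k : ℕ} (h : (p : ℤ_[p]) ^ k ∣ x - y) : (p : ℤ_[p]) ^ k ∣ f x - f y := by
  rw [← norm_le_pow_iff_dvd] at h ⊢
  exact (hf x y).trans h

lemma summable_mul_pow_p (x : ℕ → ℤ_[p]) : Summable fun j => x j * (p : ℤ_[p]) ^ j := by
  have hp : (1 : ℝ) < p := mod_cast (Fact.out : p.Prime).one_lt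
  refine Summable.of_norm_bounded
    (summable_geometric_of_lt_one (by positivity) (inv_lt_one_of_one_lt₀ hp)) fun j => ?_
  calc ‖x j * (p : ℤ_[p]) ^ j‖ ≤ ‖(p : ℤ_[p]) ^ j‖ := by
        rw [norm_mul]; exact mul_le_of_le_one_left (norm_nonneg _) (norm_le_one _)
    _ = ((p : ℝ)⁻¹) ^ j := by simp

lemma tsum_mul_pow_p_eq_sum_add (x : ℕ → ℤ_[p]) (k : ℕ) :
    ∑' j, x j * (p : ℤ_[p]) ^ j = ∑ j ∈ Finset.range k, x j * (p : ℤ_[p]) ^ j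
      + (p : ℤ_[p]) ^ k * ∑' j, x (j + k) * (p : ℤ_[p]) ^ j := by
  rw [← (summable_mul_pow_p x).sum_add_tsum_nat_add k, ← (summable_mul_pow_p _).tsum_mul_left]
  exact congrArg _ (tsum_congr fun j => by ring)

variable (p) in
noncomputable def ofDigits (a : ℕ → ℕ) : ℤ_[p] := ∑' j, (a j : ℤ_[p]) * (p : ℤ_[p]) ^ j

lemma ofDigits_eq_add_pow_mul (a : ℕ → ℕ) (k : ℕ) :
    ofDigits p a = ((∑ j ∈ Finset.range k, a j * p ^ j : ℕ) : ℤ_[p])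
      + (p : ℤ_[p]) ^ k * ofDigits p (fun j => a (j + k)) := by
  rw [ofDigits, tsum_mul_pow_p_eq_sum_add _ k]
  push_cast
  rfl

lemma ofDigits_eq_add_mul_shift (a : ℕ → ℕ) :
    ofDigits p a = a 0 + (p : ℤ_[p]) * ofDigits p (fun j => a (j + 1)) := by
  simp [ofDigits_eq_add_pow_mul a 1]

lemma toZMod_ofDigits (a : ℕ → ℕ) : toZMod (ofDigits p a) = a 0 := by
  simp [ofDigits_eq_add_mul_shift a]

lemma head_eq_of_ofDigits_eq {b c : ℕ → ℕ} (hb : b 0 < p) (hc : c 0 < p)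
    (h : ofDigits p b = ofDigits p c) : b 0 = c 0 := by
  have := congrArg toZMod h
  rwa [toZMod_ofDigits, toZMod_ofDigits, ZMod.natCast_eq_natCast_iff', Nat.mod_eq_of_lt hb,
    Nat.mod_eq_of_lt hc] at this

lemma ofDigits_injective {b c : ℕ → ℕ} (hb : ∀ j, b j < p) (hc : ∀ j, c j < p)
    (h : ofDigits p b = ofDigits p c) : b = c := by
  funext n
  induction n generalizing b c with
  | zero => exact head_eq_of_ofDigits_eq (hb 0) (hc 0) h
  | succ n ih =>
    have h0 := head_eq_of_ofDigits_eq (hb 0) (hc 0) h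
    rw [ofDigits_eq_add_mul_shift b, ofDigits_eq_add_mul_shift c, h0, add_right_inj] at h
    exact ih (fun j => hb (j + 1)) (fun j => hc (j + 1))
      (mul_left_cancel₀ (Nat.cast_ne_zero.2 (Fact.out : p.Prime).ne_zero) h)

end PadicInt

open PadicInt

lemma exists_isSection_apply_zero {p : ℕ} [Fact p.Prime] {f : ℤ_[p] → ℤ_[p]}
    (hf : ∀ x y, ‖f x - f y‖ ≤ ‖x - y‖) {k m r : ℕ} (hr : r < p ^ k) {z : ℤ_[p]}
    (hm : f m = r + (p : ℤ_[p]) ^ k * z) : ∃ h, IsSection p f h k m ∧ h 0 = z := by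
  have hdvd (y : ℤ_[p]) : (p : ℤ_[p]) ^ k ∣ f (m + p ^ k * y) - r := by
    have hsplit : f (m + p ^ k * y) - r = f (m + p ^ k * y) - f m + p ^ k * z := by
      rw [hm]; ring
    rw [hsplit]
    exact dvd_add (pow_dvd_sub_of_lipschitz hf ⟨y, by ring⟩) (dvd_mul_right _ z)
  choose h hh using hdvd
  refine ⟨h, ⟨r, hr, fun y => by linear_combination hh y⟩, ?_⟩
  have h0 := hh 0
  rw [mul_zero, add_zero, hm, add_sub_cancel_left] at h0
  have hpk : (p : ℤ_[p]) ^ k ≠ 0 := pow_ne_zero k (Nat.cast_ne_zero.2 (Fact.out : p.Prime).ne_zero)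
  exact (mul_left_cancel₀ hpk h0).symm

lemma exists_lt_map_eq_of_ncard_le {α : Type*} {S : Set α} (hS : S.Finite) {q : ℕ}
    (hq : S.ncard ≤ q) (g : ℕ → α) (hg : ∀ k, 1 ≤ k → k ≤ q + 1 → g k ∈ S) :
    ∃ s t, 1 ≤ s ∧ s < t ∧ t ≤ q + 1 ∧ g s = g t := by
  obtain ⟨s, hs, t, ht, hne, hst⟩ := Set.exists_ne_map_eq_of_ncard_lt_of_maps_to
    (s := Set.Icc 1 (q + 1)) (by simp; omega) (fun k hk => hg k hk.1 hk.2) hS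
  rcases hne.lt_or_gt with h | h
  · exact ⟨s, t, hs.1, h, ht.2, hst⟩
  · exact ⟨t, s, ht.1, h, hs.2, hst.symm⟩

/-- If a 1-Lipschitz `f : ℤ_p → ℤ_p` has at most `q` sections, then for every `0 ≤ i < p`
the digit expansion of `f(i)` is eventually periodic with period at most `q` and
preperiod at most `q + 1`. -/
theorem digits_of_image_eventually_periodic (p : ℕ) [Fact p.Prime]
    (f : PadicInt p → PadicInt p)
    (hf : ∀ x y : PadicInt p, ‖f x - f y‖ ≤ ‖x - y‖)
    (q : ℕ) (hfin : (SectionsSet p f).Finite) (hcard : (SectionsSet p f).ncard ≤ q) :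
    ∀ i : ℕ, i < p →
      ∀ a : ℕ → ℕ, (∀ j, a j < p) →
        f (i : PadicInt p) = (∑' j : ℕ, (a j : PadicInt p) * (p : PadicInt p) ^ j) →
        ∃ m : ℕ, 1 ≤ m ∧ m ≤ q ∧ ∀ j : ℕ, q + 1 ≤ j → a (j + m) = a j := by
  intro i hi a ha hfa
  have tail_section (k : ℕ) (hk : 1 ≤ k) :
      ∃ h ∈ SectionsSet p f, h 0 = ofDigits p (fun j => a (j + k)) := by
    obtain ⟨h, hsec, h0⟩ := exists_isSection_apply_zero hf (sum_range_mul_pow_lt_pow ha k)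
      (hfa.trans (ofDigits_eq_add_pow_mul a k))
    exact ⟨h, ⟨k, i, hi.trans_le (Nat.le_self_pow (by omega) p), hsec⟩, h0⟩
  choose! H hHS hH0 using tail_section
  obtain ⟨s, t, hs, hst, ht, hHst⟩ :=
    exists_lt_map_eq_of_ncard_le hfin hcard H fun k hk _ => hHS k hk
  have shifts_eq := ofDigits_injective (fun _ => ha _) (fun _ => ha _)
    (by rw [← hH0 s hs, ← hH0 t (by omega), hHst] :
      ofDigits p (fun j => a (j + s)) = ofDigits p (fun j => a (j + t)))
  refine ⟨t - s, by omega, by omega, fun j hj => ?_⟩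
  have := congrFun shifts_eq (j - s)
  rwa [Nat.sub_add_cancel (by omega), show j - s + t = j + (t - s) by omega, eq_comm] at this
end

section
/- Let p be a prime, f : ℤ_p → ℤ_p a 1-Lipschitz function, and let (k, m) and (k', m') be vertices (k, k' ≥ 0, 0 ≤ m < p^k, 0 ≤ m' < p^{k'}) with sections h and h' of f, respectively. If b^f_{m + n·p^k} = b^f_{m' + n·p^{k'}} for every integer n ≥ p and b^h_i = b^{h'}_i for every integer i with 0 ≤ i < p, then h = h' as functions ℤ_p → ℤ_p. (In other words, the pair consisting of the section of the coefficient sequence (b^f_n) at a vertex v and the first p reduced van der Put coefficients of the section of f at v completely determines the section of f at v.) -/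
lemma aux_log {p : ℕ} [Fact p.Prime] (k m n : ℕ) (hm : m < p ^ k) (hn : 1 ≤ n) :
    Nat.log p (m + n * p ^ k) = k + Nat.log p n := by
  have hp : 1 < p := (Fact.out : p.Prime).one_lt
  have h1 : p ^ Nat.log p n ≤ n := Nat.pow_log_le_self p (by omega)
  have h2 : n < p ^ (Nat.log p n + 1) := Nat.lt_pow_succ_log_self hp n
  apply Nat.log_eq_of_pow_le_of_lt_pow
  · calc p ^ (k + Nat.log p n) = p ^ Nat.log p n * p ^ k := by ring
    _ ≤ n * p ^ k := Nat.mul_le_mul_right _ h1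
    _ ≤ m + n * p ^ k := Nat.le_add_left _ _
  · calc m + n * p ^ k < (n + 1) * p ^ k := by nlinarith
    _ ≤ p ^ (Nat.log p n + 1) * p ^ k := Nat.mul_le_mul_right _ (by omega)
    _ = p ^ (k + Nat.log p n + 1) := by ring

lemma aux_mod {p : ℕ} [Fact p.Prime] (k m n : ℕ) (hm : m < p ^ k) :
    (m + n * p ^ k) % p ^ (k + Nat.log p n) = m + (n % p ^ Nat.log p n) * p ^ k := by
  have hp : 1 < p := (Fact.out : p.Prime).one_lt
  set L := Nat.log p n
  obtain ⟨q, hq⟩ : ∃ q, n = p ^ L * q + n % p ^ L := ⟨n / p ^ L, (Nat.div_add_mod n _).symm⟩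
  have hs : n % p ^ L < p ^ L := Nat.mod_lt _ (by positivity)
  have hrw : m + n * p ^ k = (m + (n % p ^ L) * p ^ k) + q * p ^ (k + L) := by
    nth_rewrite 1 [hq]; ring
  rw [hrw, Nat.add_mul_mod_self_right, Nat.mod_eq_of_lt]
  have hA : 1 ≤ p ^ k := Nat.one_le_pow _ _ (by omega)
  have hB : 1 ≤ p ^ L := Nat.one_le_pow _ _ (by omega)
  calc m + (n % p ^ L) * p ^ k < p ^ k + (n % p ^ L) * p ^ k := by omega
  _ ≤ p ^ k + (p ^ L - 1) * p ^ k :=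
      Nat.add_le_add_left (Nat.mul_le_mul_right _ (by omega)) _
  _ = p ^ L * p ^ k := by
      rw [Nat.sub_one_mul, Nat.add_sub_cancel' (Nat.le_mul_of_pos_left _ (by omega))]
  _ = p ^ (k + L) := by ring

/-- If the sections of the sequence of reduced van der Put coefficients of a 1-Lipschitz
`f` at two vertices `(k, m)` and `(k', m')` coincide from index `p` on, and the first `p`
reduced van der Put coefficients of the corresponding sections `h`, `h'` of `f` coincide,
then `h = h'`. -/
theorem coefficients_and_first_level_determine_section (p : ℕ) [Fact p.Prime]
    (f : PadicInt p → PadicInt p)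
    (hf : ∀ x y : PadicInt p, ‖f x - f y‖ ≤ ‖x - y‖)
    -- `bf` is the sequence of reduced van der Put coefficients of `f`
    (bf : ℕ → PadicInt p)
    (hbf : ∀ n : ℕ, (p : PadicInt p) ^ Nat.log p n * bf n = vdpB p f n)
    (k m k' m' : ℕ) (hm : m < p ^ k) (hm' : m' < p ^ k')
    (h h' : PadicInt p → PadicInt p)
    (hsec : IsSection p f h k m) (hsec' : IsSection p f h' k' m')
    -- `bh`, `bh'` are the sequences of reduced van der Put coefficients of `h`, `h'`
    (bh bh' : ℕ → PadicInt p)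
    (hbh : ∀ n : ℕ, (p : PadicInt p) ^ Nat.log p n * bh n = vdpB p h n)
    (hbh' : ∀ n : ℕ, (p : PadicInt p) ^ Nat.log p n * bh' n = vdpB p h' n)
    (htail : ∀ n : ℕ, p ≤ n → bf (m + n * p ^ k) = bf (m' + n * p ^ k'))
    (hfirst : ∀ i : ℕ, i < p → bh i = bh' i) :
    h = h' := by
  obtain ⟨r, hr, hrr⟩ := hsec
  obtain ⟨r', hr', hrr'⟩ := hsec'
  have hp : 1 < p := (Fact.out : p.Prime).one_lt
  have hp0 : (p : PadicInt p) ≠ 0 := Nat.cast_ne_zero.mpr (by omega)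
  -- sections of a 1-Lipschitz function are 1-Lipschitz
  have lip : ∀ (g : PadicInt p → PadicInt p) (kk rr mm : ℕ),
      (∀ y, f ((mm : PadicInt p) + (p : PadicInt p) ^ kk * y)
        = (rr : PadicInt p) + (p : PadicInt p) ^ kk * g y) →
      ∀ x y, ‖g x - g y‖ ≤ ‖x - y‖ := by
    intro g kk rr mm hg x y
    have e : (p : PadicInt p) ^ kk * (g x - g y)
        = f ((mm : PadicInt p) + (p : PadicInt p) ^ kk * x)
          - f ((mm : PadicInt p) + (p : PadicInt p) ^ kk * y) := by
      rw [hg, hg]; ring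
    have hle := hf ((mm : PadicInt p) + (p : PadicInt p) ^ kk * x)
      ((mm : PadicInt p) + (p : PadicInt p) ^ kk * y)
    have e2 : (mm : PadicInt p) + (p : PadicInt p) ^ kk * x
        - ((mm : PadicInt p) + (p : PadicInt p) ^ kk * y)
        = (p : PadicInt p) ^ kk * (x - y) := by ring
    rw [e2, ← e, norm_mul, norm_mul] at hle
    have hpos : 0 < ‖(p : PadicInt p) ^ kk‖ :=
      norm_pos_iff.mpr (pow_ne_zero _ hp0)
    exact le_of_mul_le_mul_left hle hpos
  -- agreement on ℕ
  have key : ∀ n : ℕ, h (n : PadicInt p) = h' (n : PadicInt p) := by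
    intro n
    induction n using Nat.strong_induction_on with
    | _ n ih =>
      by_cases hn : n < p
      · have e1 := hbh n
        have e2 := hbh' n
        rw [vdpB, if_pos hn] at e1 e2
        rw [Nat.log_of_lt hn, pow_zero, one_mul] at e1 e2
        rw [← e1, ← e2, hfirst n hn]
      · push_neg at hn
        set L := Nat.log p n with hL
        have hn0 : 1 ≤ n := by omega
        have hpowL : p ^ L ≤ n := Nat.pow_log_le_self p (by omega)
        have hs : n % p ^ L < p ^ L := Nat.mod_lt _ (by positivity)
        have hslt : n % p ^ L < n := lt_of_lt_of_le hs hpowL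
        -- relate bf (m + n p^k) with bh n (generic over the vertex)
        have main : ∀ (kk mm rr : ℕ) (g : PadicInt p → PadicInt p), mm < p ^ kk →
            (∀ y, f ((mm : PadicInt p) + (p : PadicInt p) ^ kk * y)
              = (rr : PadicInt p) + (p : PadicInt p) ^ kk * g y) →
            ∀ bg : ℕ → PadicInt p, (p : PadicInt p) ^ L * bg n = vdpB p g n →
            bf (mm + n * p ^ kk) = bg n := by
          intro kk mm rr g hmm hg bg hbgn
          have hlog : Nat.log p (mm + n * p ^ kk) = kk + L := aux_log kk mm n hmm hn0
          have hmod : (mm + n * p ^ kk) % p ^ (kk + L) = mm + (n % p ^ L) * p ^ kk :=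
            aux_mod kk mm n hmm
          have hNp : ¬ (mm + n * p ^ kk < p) := by
            have h1 : 1 ≤ p ^ kk := Nat.one_le_pow _ _ (by omega)
            have : n * 1 ≤ n * p ^ kk := Nat.mul_le_mul_left _ h1
            omega
          have e := hbf (mm + n * p ^ kk)
          rw [vdpB, if_neg hNp, hlog, hmod] at e
          have c1 : ((mm + n * p ^ kk : ℕ) : PadicInt p)
              = (mm : PadicInt p) + (p : PadicInt p) ^ kk * (n : PadicInt p) := by
            push_cast; ring
          have c2 : ((mm + (n % p ^ L) * p ^ kk : ℕ) : PadicInt p)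
              = (mm : PadicInt p) + (p : PadicInt p) ^ kk * ((n % p ^ L : ℕ) : PadicInt p) := by
            push_cast; ring
          rw [c1, c2, hg, hg] at e
          rw [vdpB, if_neg (by omega : ¬ n < p), ← hL] at hbgn
          have e2 : (p : PadicInt p) ^ (kk + L) * bf (mm + n * p ^ kk)
              = (p : PadicInt p) ^ (kk + L) * bg n := by
            rw [e]; linear_combination (-(p : PadicInt p) ^ kk) * hbgn
          exact mul_left_cancel₀ (pow_ne_zero _ hp0) e2
        have h1 : bf (m + n * p ^ k) = bh n := main k m r h hm hrr bh (hbh n)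
        have h2 : bf (m' + n * p ^ k') = bh' n := main k' m' r' h' hm' hrr' bh' (hbh' n)
        have hbb : bh n = bh' n := by rw [← h1, ← h2, htail n hn]
        have e1 := hbh n
        have e2 := hbh' n
        rw [vdpB, if_neg (by omega : ¬ n < p), ← hL] at e1 e2
        have := ih (n % p ^ L) hslt
        have : h (n : PadicInt p)
            = (p : PadicInt p) ^ L * bh n + h ((n % p ^ L : ℕ) : PadicInt p) := by
          rw [e1]; ring
        rw [this, hbb, e2, ih (n % p ^ L) hslt]; ring
  have ch : Continuous h := by
    refine (LipschitzWith.of_dist_le_mul (K := 1) fun x y => ?_).continuous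
    rw [dist_eq_norm, dist_eq_norm, NNReal.coe_one, one_mul]
    exact lip h k r m hrr x y
  have ch' : Continuous h' := by
    refine (LipschitzWith.of_dist_le_mul (K := 1) fun x y => ?_).continuous
    rw [dist_eq_norm, dist_eq_norm, NNReal.coe_one, one_mul]
    exact lip h' k' r' m' hrr' x y
  exact PadicInt.denseRange_natCast.equalizer ch ch' (funext fun n => key n)
end

section
/- Let t, s : ℤ_2 → ℤ_2 be 1-Lipschitz functions satisfying, for all y ∈ ℤ_2: t(2y) = 2·t(y), t(1 + 2y) = 1 + 2·s(y), s(2y) = 2·s(y), and s(1 + 2y) = 2·t(y) (the wreath recursion t = (t, s), s = (s, t) with output sending both letters to 0). Then the sequence of reduced van der Put coefficients of t is the Thue–Morse sequence: for every n ≥ 0, b^t_n = (((sum of the binary digits of n) mod 2) : ℤ_2). -/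
/-! Appending a binary digit to `n ≥ 1` appends the same digit to `n_−` and raises `⌊log₂ n⌋` by
one, so by the recursion `t n - t n_−` is twice `t m - t m_−` or twice `s m - s m_−` (where
`m = n / 2`), according to the parity of `n`. Binary induction from `n = 1` therefore gives
`t n - t n_− = 2^⌊log₂ n⌋ τ(n)` and `s n - s n_− = 2^⌊log₂ n⌋ (1 - τ(n))`, with `τ` the
Thue–Morse sequence. -/

/-- The van der Put coefficients of `f : ℤ_2 → ℤ_2`:
`B^f_n = f(n)` for `n < 2` and `B^f_n = f(n) - f(n mod 2^⌊log_2 n⌋)` for `n ≥ 2`. -/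
noncomputable def vdpB2 (f : PadicInt 2 → PadicInt 2) (n : ℕ) : PadicInt 2 :=
  if n < 2 then f n else f n - f ((n % 2 ^ Nat.log 2 n : ℕ))

def dropLeadingBit (n : ℕ) : ℕ := n % 2 ^ Nat.log 2 n

def thueMorse (n : ℕ) : ℕ := (Nat.digits 2 n).sum % 2

lemma dropLeadingBit_bit (b : Bool) {n : ℕ} (hn : n ≠ 0) :
    dropLeadingBit (Nat.bit b n) = Nat.bit b (dropLeadingBit n) := by
  unfold dropLeadingBit
  rw [Nat.log_two_bit hn, pow_succ', Nat.mod_mul, Nat.bit_mod_two, Nat.bit_div_two, Nat.bit_val]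
  cases b <;> simp [Nat.add_comm]

lemma thueMorse_bit (b : Bool) {n : ℕ} (hn : n ≠ 0) :
    thueMorse (Nat.bit b n) = (b.toNat + thueMorse n) % 2 := by
  unfold thueMorse
  rw [Nat.bit_val, add_comm, Nat.digits_add 2 one_lt_two _ _ (Bool.toNat_lt b) (Or.inr hn),
    List.sum_cons, Nat.add_mod_mod]

lemma cast_thueMorse_bit_false {R : Type*} [Ring R] {n : ℕ} (hn : n ≠ 0) :
    (thueMorse (Nat.bit false n) : R) = thueMorse n := by
  rw [thueMorse_bit false hn, Bool.toNat_false, zero_add, thueMorse, Nat.mod_mod]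

lemma cast_thueMorse_bit_true {R : Type*} [Ring R] {n : ℕ} (hn : n ≠ 0) :
    (thueMorse (Nat.bit true n) : R) = 1 - thueMorse n := by
  rw [thueMorse_bit true hn, Bool.toNat_true]
  rcases Nat.mod_two_eq_zero_or_one (Nat.digits 2 n).sum with h | h <;>
    simp [thueMorse, h]

lemma apply_zero_eq_zero_of_two_mul {R : Type*} [CommRing R] {f : R → R}
    (h : ∀ y, f (2 * y) = 2 * f y) : f 0 = 0 := by
  have h0 := h 0
  rw [mul_zero] at h0
  linear_combination -h0

lemma sub_dropLeadingBit_eq_thueMorse {R : Type*} [CommRing R] {t s : R → R}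
    (ht0 : ∀ y, t (2 * y) = 2 * t y) (ht1 : ∀ y, t (1 + 2 * y) = 1 + 2 * s y)
    (hs0 : ∀ y, s (2 * y) = 2 * s y) (hs1 : ∀ y, s (1 + 2 * y) = 2 * t y) {n : ℕ} (hn : n ≠ 0) :
    t n - t (dropLeadingBit n) = 2 ^ Nat.log 2 n * thueMorse n ∧
      s n - s (dropLeadingBit n) = 2 ^ Nat.log 2 n * (1 - thueMorse n) := by
  induction n using Nat.binaryRecFromOne with
  | zero => exact absurd rfl hn
  | one =>
    have ht00 := apply_zero_eq_zero_of_two_mul ht0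
    have hs00 := apply_zero_eq_zero_of_two_mul hs0
    have ht11 : t 1 = 1 := by simpa [hs00] using ht1 0
    have hs11 : s 1 = 0 := by simpa [ht00] using hs1 0
    simp [dropLeadingBit, thueMorse, ht00, hs00, ht11, hs11]
  | bit b m hm ih =>
    obtain ⟨iht, ihs⟩ := ih hm
    rw [dropLeadingBit_bit b hm, Nat.log_two_bit hm, pow_succ']
    cases b
    · rw [cast_thueMorse_bit_false hm]
      simp only [Nat.bit_false_apply, Nat.cast_mul, Nat.cast_ofNat, ht0, hs0]
      exact ⟨by linear_combination 2 * iht, by linear_combination 2 * ihs⟩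
    · rw [cast_thueMorse_bit_true hm]
      simp only [Nat.bit_true_apply, Nat.cast_add, Nat.cast_mul, Nat.cast_ofNat, Nat.cast_one,
        add_comm _ (1 : R), ht1, hs1]
      exact ⟨by linear_combination 2 * ihs, by linear_combination 2 * iht⟩

lemma vdpB2_eq_sub_dropLeadingBit {f : PadicInt 2 → PadicInt 2} (hf : f 0 = 0) (n : ℕ) :
    vdpB2 f n = f n - f (dropLeadingBit n) := by
  unfold vdpB2 dropLeadingBit
  split_ifs with hn
  · interval_cases n <;> simp [hf]
  · rfl

theorem thueMorse_reduced_vanDerPut_general (t s : PadicInt 2 → PadicInt 2)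
    (ht0 : ∀ y : PadicInt 2, t (2 * y) = 2 * t y)
    (ht1 : ∀ y : PadicInt 2, t (1 + 2 * y) = 1 + 2 * s y)
    (hs0 : ∀ y : PadicInt 2, s (2 * y) = 2 * s y)
    (hs1 : ∀ y : PadicInt 2, s (1 + 2 * y) = 2 * t y)
    -- `bt` is the sequence of reduced van der Put coefficients of `t`
    (bt : ℕ → PadicInt 2)
    (hbt : ∀ n : ℕ, (2 : PadicInt 2) ^ Nat.log 2 n * bt n = vdpB2 t n) :
    ∀ n : ℕ, bt n = (((Nat.digits 2 n).sum % 2 : ℕ) : PadicInt 2) := by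
  intro n
  refine mul_left_cancel₀ (pow_ne_zero (Nat.log 2 n) two_ne_zero) ?_
  rw [hbt, vdpB2_eq_sub_dropLeadingBit (apply_zero_eq_zero_of_two_mul ht0)]
  rcases eq_or_ne n 0 with rfl | hn
  · simp [dropLeadingBit]
  · exact (sub_dropLeadingBit_eq_thueMorse ht0 ht1 hs0 hs1 hn).1

/-- For the 1-Lipschitz maps `t, s : ℤ_2 → ℤ_2` given by the wreath recursion
`t = (t, s)`, `s = (s, t)` with output sending both letters to `0`, the sequence of
reduced van der Put coefficients of `t` is the Thue–Morse sequence. -/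
theorem thueMorse_reduced_vanDerPut (t s : PadicInt 2 → PadicInt 2)
    (ht : ∀ x y : PadicInt 2, ‖t x - t y‖ ≤ ‖x - y‖)
    (hs : ∀ x y : PadicInt 2, ‖s x - s y‖ ≤ ‖x - y‖)
    (ht0 : ∀ y : PadicInt 2, t (2 * y) = 2 * t y)
    (ht1 : ∀ y : PadicInt 2, t (1 + 2 * y) = 1 + 2 * s y)
    (hs0 : ∀ y : PadicInt 2, s (2 * y) = 2 * s y)
    (hs1 : ∀ y : PadicInt 2, s (1 + 2 * y) = 2 * t y)
    -- `bt` is the sequence of reduced van der Put coefficients of `t`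
    (bt : ℕ → PadicInt 2)
    (hbt : ∀ n : ℕ, (2 : PadicInt 2) ^ Nat.log 2 n * bt n = vdpB2 t n) :
    ∀ n : ℕ, bt n = (((Nat.digits 2 n).sum % 2 : ℕ) : PadicInt 2) :=
  thueMorse_reduced_vanDerPut_general t s ht0 ht1 hs0 hs1 bt hbt
end
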